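/- arXiv:1804.08963 — 12 statements merged into one kernel-verified Lean document; each statement's English description precedes it below -/
import Mathlib

section
/- Let A be a maximal dissipative operator on a complex Hilbert space H. Then there exists a complex Hilbert space E and a linear operator Γ : D(A) → E which is bounded with respect to the graph norm of A and has dense range in E, such that ⟨Au,v⟩_H − ⟨u,Av⟩_H = i⟨Γu,Γv⟩_E for all u,v ∈ D(A). Similarly, there exists a complex Hilbert space E_* and a linear operator Γ_* : D(A*) → E_* which is bounded with respect to the graph norm of A* and has dense range in E_*, such that ⟨A*u,v⟩_H − ⟨u,A*v⟩_H = −i⟨Γ_*u,Γ_*v⟩_{E_*} for all u,v ∈ D(A*). -/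
open scoped ComplexInnerProductSpace

noncomputable section

/-- A maximal dissipative operator on a complex Hilbert space `H`, together with the
(derivable) data of its resolvent on the open lower half-plane and the resolvent of its
adjoint on the open upper half-plane.  Here the inner product `⟪·,·⟫` is conjugate-linear
in the first variable, so that the paper's `⟨x, y⟩` corresponds to `⟪y, x⟫`. -/
structure MDO (H : Type*) [NormedAddCommGroup H] [InnerProductSpace ℂ H]
    [CompleteSpace H] where
  /-- The underlying densely defined operator. -/
  A : H →ₗ.[ℂ] H
  dense_dom : Dense (A.domain : Set H)
  dissipative : ∀ u : A.domain, 0 ≤ (⟪(u : H), A u⟫).im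
  /-- `R z` is the bounded inverse `(A - z)⁻¹`, for `Im z < 0`. -/
  R : ℂ → H →L[ℂ] H
  R_mem : ∀ z, z.im < 0 → ∀ h : H, R z h ∈ A.domain
  R_right : ∀ z (hz : z.im < 0) (h : H), A ⟨R z h, R_mem z hz h⟩ - z • R z h = h
  R_left : ∀ z, z.im < 0 → ∀ u : A.domain, R z (A u - z • (u : H)) = (u : H)
  dense_dom_star : Dense (A.adjoint.domain : Set H)
  anti_dissipative_star : ∀ u : A.adjoint.domain, (⟪(u : H), A.adjoint u⟫).im ≤ 0
  /-- `Rs z` is the bounded inverse `(A* - z)⁻¹`, for `Im z > 0`. -/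
  Rs : ℂ → H →L[ℂ] H
  Rs_mem : ∀ z, 0 < z.im → ∀ h : H, Rs z h ∈ A.adjoint.domain
  Rs_right : ∀ z (hz : 0 < z.im) (h : H),
    A.adjoint ⟨Rs z h, Rs_mem z hz h⟩ - z • Rs z h = h
  Rs_left : ∀ z, 0 < z.im → ∀ u : A.adjoint.domain,
    Rs z (A.adjoint u - z • (u : H)) = (u : H)

/-- The data of a Hilbert space `E` and an operator `Γ : D(T) → E`, bounded in the graph
norm of `T` and with dense range, satisfying the Lagrange identity
`⟨Tu, v⟩ - ⟨u, Tv⟩ = c ⟨Γu, Γv⟩` (written here in the Mathlib inner product convention,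
which is conjugate-linear in the first slot, so the paper's `⟨x,y⟩` is `⟪y,x⟫`). -/
structure LagrangeData {H : Type u} [NormedAddCommGroup H] [InnerProductSpace ℂ H]
    (T : H →ₗ.[ℂ] H) (c : ℂ) : Type (u + 1) where
  E : Type u
  [instN : NormedAddCommGroup E]
  [instI : InnerProductSpace ℂ E]
  [instC : CompleteSpace E]
  Γ : T.domain →ₗ[ℂ] E
  bdd : ∃ C : ℝ, ∀ u : T.domain, ‖Γ u‖ ≤ C * (‖(u : H)‖ + ‖T u‖)
  dense_range : DenseRange Γ
  lagrange : ∀ u v : T.domain, ⟪(v : H), T u⟫ - ⟪T v, (u : H)⟫ = c * ⟪Γ v, Γ u⟫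

/-!
The form `β(u, v) = -i (⟪u, A v⟫ - ⟪A u, v⟫)` on `D(A)` is hermitian, and its diagonal
`β(u, u) = 2 Im ⟪u, A u⟫` is nonnegative by dissipativity, so it is a semi-inner product on `D(A)`;
by Cauchy–Schwarz it is dominated by the square of the graph norm. Take for `E` the Hilbert space
completion of `D(A)` under `β` (modulo its null space) and for `Γ` the canonical map: its range is
dense and `⟪Γ u, Γ v⟫ = β(u, v)` is the Lagrange identity. For `A*` the same works with `i` in
place of `-i`, since `Im ⟪u, A* u⟫ ≤ 0`.
-/

open scoped InnerProductSpace
open UniformSpace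

section CoreCompletion

variable {𝕜 : Type*} [RCLike 𝕜] {V : Type*} [AddCommGroup V] [Module 𝕜 V]

/-- A type synonym, so that the semi-inner product `c` does not clash with a norm that `V` may
already carry. -/
def WithInnerCore (_c : PreInnerProductSpace.Core 𝕜 V) : Type _ := V

namespace WithInnerCore

variable (c : PreInnerProductSpace.Core 𝕜 V)

instance : SeminormedAddCommGroup (WithInnerCore c) :=
  @InnerProductSpace.Core.toSeminormedAddCommGroup 𝕜 V _ _ _ c

instance : InnerProductSpace 𝕜 (WithInnerCore c) := InnerProductSpace.ofCore c

def toCompletion : V →ₗ[𝕜] Completion (WithInnerCore c) :=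
  (Completion.toComplₗᵢ : WithInnerCore c →ₗᵢ[𝕜] _).toLinearMap

theorem denseRange_toCompletion : DenseRange (toCompletion c) :=
  Completion.denseRange_coe (α := WithInnerCore c)

theorem inner_toCompletion (x y : V) : ⟪toCompletion c x, toCompletion c y⟫_𝕜 = c.inner x y :=
  Completion.inner_coe (E := WithInnerCore c) x y

end WithInnerCore

end CoreCompletion

section BoundaryForm

variable {H : Type*} [NormedAddCommGroup H] [InnerProductSpace ℂ H]

def boundaryForm (T : H →ₗ.[ℂ] H) (c : ℂ) (u v : T.domain) : ℂ :=
  c⁻¹ * (⟪(u : H), T v⟫ - ⟪T u, (v : H)⟫)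

variable (T : H →ₗ.[ℂ] H) (c : ℂ)

theorem boundaryForm_conj_symm (hc : starRingEnd ℂ c = -c) (u v : T.domain) :
    starRingEnd ℂ (boundaryForm T c v u) = boundaryForm T c u v := by
  simp only [boundaryForm, map_mul, map_inv₀, hc, map_sub, inner_conj_symm]
  ring

theorem boundaryForm_add_left (u v w : T.domain) :
    boundaryForm T c (u + v) w = boundaryForm T c u w + boundaryForm T c v w := by
  simp only [boundaryForm, T.map_add, Submodule.coe_add, inner_add_left]
  ring

theorem boundaryForm_smul_left (r : ℂ) (u v : T.domain) :
    boundaryForm T c (r • u) v = starRingEnd ℂ r * boundaryForm T c u v := by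
  simp only [boundaryForm, T.map_smul, Submodule.coe_smul, inner_smul_left]
  ring

@[reducible]
def boundaryCore (hc : starRingEnd ℂ c = -c) (hpos : ∀ u, 0 ≤ (boundaryForm T c u u).re) :
    PreInnerProductSpace.Core ℂ T.domain where
  inner := boundaryForm T c
  conj_inner_symm := boundaryForm_conj_symm T c hc
  re_inner_nonneg := hpos
  add_left := boundaryForm_add_left T c
  smul_left u v r := boundaryForm_smul_left T c r u v

theorem norm_boundaryForm_self_le (u : T.domain) :
    ‖boundaryForm T c u u‖ ≤ ‖c‖⁻¹ * (‖(u : H)‖ + ‖T u‖) ^ 2 := by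
  have hsub : ‖⟪(u : H), T u⟫ - ⟪T u, (u : H)⟫‖ ≤ 2 * ‖(u : H)‖ * ‖T u‖ :=
    calc ‖⟪(u : H), T u⟫ - ⟪T u, (u : H)⟫‖
        ≤ ‖⟪(u : H), T u⟫‖ + ‖⟪T u, (u : H)⟫‖ := norm_sub_le _ _
      _ ≤ ‖(u : H)‖ * ‖T u‖ + ‖T u‖ * ‖(u : H)‖ := by
          gcongr <;> exact norm_inner_le_norm _ _
      _ = 2 * ‖(u : H)‖ * ‖T u‖ := by ring
  rw [boundaryForm, norm_mul, norm_inv]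
  gcongr
  nlinarith [sq_nonneg (‖(u : H)‖ - ‖T u‖)]

def lagrangeData (hc0 : c ≠ 0) (hc : starRingEnd ℂ c = -c)
    (hpos : ∀ u, 0 ≤ (boundaryForm T c u u).re) : LagrangeData T c where
  E := Completion (WithInnerCore (boundaryCore T c hc hpos))
  Γ := WithInnerCore.toCompletion _
  bdd := by
    refine ⟨√‖c‖⁻¹, fun u => ?_⟩
    set Γ := WithInnerCore.toCompletion (boundaryCore T c hc hpos)
    have hsq : ‖Γ u‖ ^ 2 ≤ ‖c‖⁻¹ * (‖(u : H)‖ + ‖T u‖) ^ 2 :=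
      calc ‖Γ u‖ ^ 2 = (boundaryForm T c u u).re := by
            rw [@norm_sq_eq_re_inner ℂ, WithInnerCore.inner_toCompletion]; rfl
        _ ≤ ‖boundaryForm T c u u‖ := Complex.re_le_norm _
        _ ≤ _ := norm_boundaryForm_self_le T c u
    calc ‖Γ u‖ = √(‖Γ u‖ ^ 2) := (Real.sqrt_sq (norm_nonneg _)).symm
      _ ≤ √(‖c‖⁻¹ * (‖(u : H)‖ + ‖T u‖) ^ 2) := Real.sqrt_le_sqrt hsq
      _ = √‖c‖⁻¹ * (‖(u : H)‖ + ‖T u‖) := by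
          rw [Real.sqrt_mul (by positivity), Real.sqrt_sq (by positivity)]
  dense_range := WithInnerCore.denseRange_toCompletion _
  lagrange u v := by
    rw [WithInnerCore.inner_toCompletion]
    change _ = c * boundaryForm T c v u
    rw [boundaryForm, ← mul_assoc, mul_inv_cancel₀ hc0, one_mul]

theorem re_boundaryForm_I_self (u : T.domain) :
    (boundaryForm T Complex.I u u).re = 2 * (⟪(u : H), T u⟫).im := by
  rw [boundaryForm, ← inner_conj_symm (T u : H), Complex.sub_conj]
  simp

theorem re_boundaryForm_neg_I_self (u : T.domain) :
    (boundaryForm T (-Complex.I) u u).re = -(2 * (⟪(u : H), T u⟫).im) := by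
  rw [boundaryForm, ← inner_conj_symm (T u : H), Complex.sub_conj]
  simp

end BoundaryForm

/-- For a maximal dissipative operator `A` there exist a Hilbert space `E`
and an operator `Γ : D(A) → E`, bounded in the graph norm with dense range, with
`⟨Au,v⟩ - ⟨u,Av⟩ = i⟨Γu,Γv⟩`; and similarly a Hilbert space `E_*` and
`Γ_* : D(A*) → E_*` with `⟨A*u,v⟩ - ⟨u,A*v⟩ = -i⟨Γ_*u,Γ_*v⟩`. -/
theorem stmt0 {H : Type u} [NormedAddCommGroup H] [InnerProductSpace ℂ H]
    [CompleteSpace H] (M : MDO H) :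
    Nonempty (LagrangeData M.A Complex.I) ∧
      Nonempty (LagrangeData M.A.adjoint (-Complex.I)) := by
  refine ⟨⟨lagrangeData M.A Complex.I Complex.I_ne_zero Complex.conj_I fun u => ?_⟩,
    ⟨lagrangeData M.A.adjoint (-Complex.I) (neg_ne_zero.mpr Complex.I_ne_zero)
      (by simp) fun u => ?_⟩⟩
  · rw [re_boundaryForm_I_self]
    linarith [M.dissipative u]
  · rw [re_boundaryForm_neg_I_self]
    linarith [M.anti_dissipative_star u]

end
end

section
/- Let λ, μ ∈ ℂ with Im λ > 0 and Im μ < 0. Then, as identities between bounded operators on H: (A+λ)^{-1} − (A*+μ)^{-1} + (λ−μ)(A*+μ)^{-1}(A+λ)^{-1} = −i (Γ(A+μ̄)^{-1})* (Γ(A+λ)^{-1}), and (A+λ)^{-1} − (A*+μ)^{-1} + (λ−μ)(A+λ)^{-1}(A*+μ)^{-1} = −i (Γ_*(A*+λ̄)^{-1})* (Γ_*(A*+μ)^{-1}). Here Γ(A+λ)^{-1} : H → E and Γ_*(A*+μ)^{-1} : H → E_* are bounded operators and * denotes the Hilbert-space adjoint. -/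
open scoped ComplexInnerProductSpace

noncomputable section

/-- A maximal dissipative operator together with boundary operators `Γ`, `Γ_*` satisfying
the abstract Lagrange identities, and the bounded compositions `ΓR z = Γ ∘ (A - z)⁻¹`
(for `Im z < 0`) and `ΓsRs z = Γ_* ∘ (A* - z)⁻¹` (for `Im z > 0`). -/
structure StrausSetting (H E Es : Type*)
    [NormedAddCommGroup H] [InnerProductSpace ℂ H] [CompleteSpace H]
    [NormedAddCommGroup E] [InnerProductSpace ℂ E] [CompleteSpace E]
    [NormedAddCommGroup Es] [InnerProductSpace ℂ Es] [CompleteSpace Es]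
    extends MDO H where
  Γ : A.domain →ₗ[ℂ] E
  Γ_bdd : ∃ C : ℝ, ∀ u : A.domain, ‖Γ u‖ ≤ C * (‖(u : H)‖ + ‖A u‖)
  Γ_dense : DenseRange Γ
  lagrange : ∀ u v : A.domain,
    ⟪(v : H), A u⟫ - ⟪A v, (u : H)⟫ = Complex.I * ⟪Γ v, Γ u⟫
  Γs : A.adjoint.domain →ₗ[ℂ] Es
  Γs_bdd : ∃ C : ℝ, ∀ u : A.adjoint.domain,
    ‖Γs u‖ ≤ C * (‖(u : H)‖ + ‖A.adjoint u‖)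
  Γs_dense : DenseRange Γs
  lagrange_star : ∀ u v : A.adjoint.domain,
    ⟪(v : H), A.adjoint u⟫ - ⟪A.adjoint v, (u : H)⟫ = -Complex.I * ⟪Γs v, Γs u⟫
  /-- `ΓR z = Γ ∘ (A - z)⁻¹` as a bounded operator `H →L[ℂ] E`, for `Im z < 0`. -/
  ΓR : ℂ → H →L[ℂ] E
  ΓR_spec : ∀ z (hz : z.im < 0) (h : H), ΓR z h = Γ ⟨R z h, R_mem z hz h⟩
  /-- `ΓsRs z = Γ_* ∘ (A* - z)⁻¹` as a bounded operator `H →L[ℂ] Es`, for `Im z > 0`. -/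
  ΓsRs : ℂ → H →L[ℂ] Es
  ΓsRs_spec : ∀ z (hz : 0 < z.im) (h : H), ΓsRs z h = Γs ⟨Rs z h, Rs_mem z hz h⟩

/-- Duality of the resolvents: `(A* - z̄)⁻¹ = ((A - z)⁻¹)*` on the level of inner products. -/
private lemma MDO.resolvent_dual {H : Type*} [NormedAddCommGroup H] [InnerProductSpace ℂ H]
    [CompleteSpace H] (M : MDO H) (z w : ℂ) (hz : z.im < 0) (hw : 0 < w.im)
    (hzw : starRingEnd ℂ z = w) (g h : H) :
    ⟪g, M.Rs w h⟫ = ⟪(M.R z g : H), h⟫ := by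
  have hAeq := sub_eq_iff_eq_add.mp (M.R_right z hz g)
  have hAseq := sub_eq_iff_eq_add.mp (M.Rs_right w hw h)
  have key : ⟪(M.A.adjoint ⟨M.Rs w h, M.Rs_mem w hw h⟩ : H), (M.R z g : H)⟫
      = ⟪(M.Rs w h : H), (M.A ⟨M.R z g, M.R_mem z hz g⟩ : H)⟫ :=
    M.A.adjoint_isFormalAdjoint M.dense_dom ⟨M.Rs w h, M.Rs_mem w hw h⟩
      ⟨M.R z g, M.R_mem z hz g⟩
  have key' : ⟪(M.R z g : H), (M.A.adjoint ⟨M.Rs w h, M.Rs_mem w hw h⟩ : H)⟫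
      = ⟪(M.A ⟨M.R z g, M.R_mem z hz g⟩ : H), (M.Rs w h : H)⟫ := by
    rw [← inner_conj_symm, key, inner_conj_symm]
  have E1 : ⟪(M.A ⟨M.R z g, M.R_mem z hz g⟩ : H), (M.Rs w h : H)⟫
      = ⟪g, M.Rs w h⟫ + w * ⟪(M.R z g : H), (M.Rs w h : H)⟫ := by
    rw [hAeq, inner_add_left, inner_smul_left, hzw]
  have E2 : ⟪(M.R z g : H), (M.A.adjoint ⟨M.Rs w h, M.Rs_mem w hw h⟩ : H)⟫
      = ⟪(M.R z g : H), h⟫ + w * ⟪(M.R z g : H), (M.Rs w h : H)⟫ := by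
    rw [hAseq, inner_add_right, inner_smul_right]
  linear_combination E2 - E1 - key'

private lemma MDO.resolvent_dual' {H : Type*} [NormedAddCommGroup H] [InnerProductSpace ℂ H]
    [CompleteSpace H] (M : MDO H) (z w : ℂ) (hz : z.im < 0) (hw : 0 < w.im)
    (hzw : starRingEnd ℂ w = z) (g h : H) :
    ⟪g, M.R z h⟫ = ⟪(M.Rs w g : H), h⟫ := by
  have hz' : starRingEnd ℂ z = w := by rw [← hzw, Complex.conj_conj]
  have := M.resolvent_dual z w hz hw hz' h g
  rw [← inner_conj_symm, ← this, inner_conj_symm]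

/-- The abstract Green function identities, as identities between bounded
operators on `H`, for `Im λ > 0` and `Im μ < 0`.  Here `(A + λ)⁻¹ = R (-λ)`,
`(A* + μ)⁻¹ = Rs (-μ)`, `Γ(A + μ̄)⁻¹ = ΓR (-μ̄)`, `Γ(A + λ)⁻¹ = ΓR (-λ)`,
`Γ_*(A* + λ̄)⁻¹ = ΓsRs (-λ̄)` and `Γ_*(A* + μ)⁻¹ = ΓsRs (-μ)`. -/

theorem stmt2 {H E Es : Type*}
    [NormedAddCommGroup H] [InnerProductSpace ℂ H] [CompleteSpace H]
    [NormedAddCommGroup E] [InnerProductSpace ℂ E] [CompleteSpace E]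
    [NormedAddCommGroup Es] [InnerProductSpace ℂ Es] [CompleteSpace Es]
    (M : StrausSetting H E Es) (lam mu : ℂ) (hlam : 0 < lam.im) (hmu : mu.im < 0) :
    (M.R (-lam) - M.Rs (-mu) + (lam - mu) • (M.Rs (-mu) ∘L M.R (-lam))
        = (-Complex.I) •
          ((ContinuousLinearMap.adjoint (M.ΓR (-(starRingEnd ℂ mu)))) ∘L M.ΓR (-lam))) ∧
    (M.R (-lam) - M.Rs (-mu) + (lam - mu) • (M.R (-lam) ∘L M.Rs (-mu))
        = (-Complex.I) •
          ((ContinuousLinearMap.adjoint (M.ΓsRs (-(starRingEnd ℂ lam)))) ∘L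
            M.ΓsRs (-mu))) := by
  have hlam' : (-lam).im < 0 := by simpa using hlam
  have hmu' : (0:ℝ) < (-mu).im := by simpa using hmu
  have hmubar : (-(starRingEnd ℂ mu)).im < 0 := by simpa using hmu
  have hlambar : (0:ℝ) < (-(starRingEnd ℂ lam)).im := by simpa using hlam
  have hmueq : starRingEnd ℂ (-(starRingEnd ℂ mu)) = -mu := by
    simp
  have hlameq : starRingEnd ℂ (-(starRingEnd ℂ lam)) = -lam := by
    simp
  constructor
  · ext f
    apply ext_inner_left ℂ
    intro g
    simp only [ContinuousLinearMap.add_apply, ContinuousLinearMap.sub_apply,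
      ContinuousLinearMap.smul_apply, ContinuousLinearMap.coe_comp', Function.comp_apply,
      inner_add_right, inner_sub_right, inner_smul_right,
      ContinuousLinearMap.adjoint_inner_right]
    rw [M.toMDO.resolvent_dual (-(starRingEnd ℂ mu)) (-mu) hmubar hmu' hmueq g f,
      M.toMDO.resolvent_dual (-(starRingEnd ℂ mu)) (-mu) hmubar hmu' hmueq g (M.R (-lam) f),
      M.ΓR_spec (-(starRingEnd ℂ mu)) hmubar g, M.ΓR_spec (-lam) hlam' f]
    have hu := sub_eq_iff_eq_add.mp (M.R_right (-lam) hlam' f)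
    have hw := sub_eq_iff_eq_add.mp (M.R_right (-(starRingEnd ℂ mu)) hmubar g)
    have hlag := M.lagrange ⟨M.R (-lam) f, M.R_mem (-lam) hlam' f⟩
      ⟨M.R (-(starRingEnd ℂ mu)) g, M.R_mem (-(starRingEnd ℂ mu)) hmubar g⟩
    rw [hu, hw] at hlag
    simp only [inner_add_right, inner_add_left, inner_smul_right, inner_smul_left,
      map_neg, Complex.conj_conj] at hlag
    linear_combination -hlag
  · ext f
    apply ext_inner_left ℂ
    intro g
    simp only [ContinuousLinearMap.add_apply, ContinuousLinearMap.sub_apply,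
      ContinuousLinearMap.smul_apply, ContinuousLinearMap.coe_comp', Function.comp_apply,
      inner_add_right, inner_sub_right, inner_smul_right,
      ContinuousLinearMap.adjoint_inner_right]
    rw [M.toMDO.resolvent_dual' (-lam) (-(starRingEnd ℂ lam)) hlam' hlambar hlameq g f,
      M.toMDO.resolvent_dual' (-lam) (-(starRingEnd ℂ lam)) hlam' hlambar hlameq g
        (M.Rs (-mu) f),
      M.ΓsRs_spec (-(starRingEnd ℂ lam)) hlambar g, M.ΓsRs_spec (-mu) hmu' f]
    have hv := sub_eq_iff_eq_add.mp (M.Rs_right (-mu) hmu' f)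
    have hy := sub_eq_iff_eq_add.mp (M.Rs_right (-(starRingEnd ℂ lam)) hlambar g)
    have hlag := M.lagrange_star ⟨M.Rs (-mu) f, M.Rs_mem (-mu) hmu' f⟩
      ⟨M.Rs (-(starRingEnd ℂ lam)) g, M.Rs_mem (-(starRingEnd ℂ lam)) hlambar g⟩
    rw [hv, hy] at hlag
    simp only [inner_add_right, inner_add_left, inner_smul_right, inner_smul_left,
      map_neg, Complex.conj_conj] at hlag
    linear_combination hlag


end
end

section
/- For every u ∈ D(A) and every z ∈ ℂ with Im z > 0, the identity ‖Γ_*(A* − z)^{-1}(A − z)u‖²_{E_*} = ‖Γu‖²_E − 2 (Im z) ‖(A* − z)^{-1}(A − z)u − u‖²_H holds. -/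
open scoped ComplexInnerProductSpace

noncomputable section

private theorem stmt3_aux {H E Es : Type*}
    [NormedAddCommGroup H] [InnerProductSpace ℂ H] [CompleteSpace H]
    [NormedAddCommGroup E] [InnerProductSpace ℂ E] [CompleteSpace E]
    [NormedAddCommGroup Es] [InnerProductSpace ℂ Es] [CompleteSpace Es]
    (A : H →ₗ.[ℂ] H) (hd : Dense (A.domain : Set H))
    (Γ : A.domain →ₗ[ℂ] E) (Γs : A.adjoint.domain →ₗ[ℂ] Es)
    (lagrange : ∀ u v : A.domain,
      ⟪(v : H), A u⟫ - ⟪A v, (u : H)⟫ = Complex.I * ⟪Γ v, Γ u⟫)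
    (lagrange_star : ∀ u v : A.adjoint.domain,
      ⟪(v : H), A.adjoint u⟫ - ⟪A.adjoint v, (u : H)⟫ = -Complex.I * ⟪Γs v, Γs u⟫)
    (u : A.domain) (z : ℂ) (_hz : 0 < z.im)
    (W : A.adjoint.domain)
    (hAW : A.adjoint W = z • ((W : H) : H) + (A u - z • (u : H))) :
    ‖Γs W‖ ^ 2
      = ‖Γ u‖ ^ 2 - 2 * z.im * ‖(W : H) - (u : H)‖ ^ 2 := by
  have hΓre : (⟪Γ u, Γ u⟫).re = ‖Γ u‖ ^ 2 := inner_self_eq_norm_sq (𝕜 := ℂ) (Γ u)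
  have hΓim : (⟪Γ u, Γ u⟫).im = 0 := inner_self_im (𝕜 := ℂ) (Γ u)
  have hΓsre : (⟪Γs W, Γs W⟫).re = ‖Γs W‖ ^ 2 := inner_self_eq_norm_sq (𝕜 := ℂ) (Γs W)
  have hΓsim : (⟪Γs W, Γs W⟫).im = 0 := inner_self_im (𝕜 := ℂ) (Γs W)
  have hWre : (⟪(W : H), (W : H)⟫).re = ‖(W : H)‖ ^ 2 := inner_self_eq_norm_sq (𝕜 := ℂ) ((W : H))
  have hWim : (⟪(W : H), (W : H)⟫).im = 0 := inner_self_im (𝕜 := ℂ) ((W : H))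
  have hure : (⟪(u : H), (u : H)⟫).re = ‖(u : H)‖ ^ 2 := inner_self_eq_norm_sq (𝕜 := ℂ) ((u : H))
  have huim : (⟪(u : H), (u : H)⟫).im = 0 := inner_self_im (𝕜 := ℂ) ((u : H))
  -- norm of Γ u via the Lagrange identity
  have h1 : ‖Γ u‖ ^ 2 = 2 * (⟪(u : H), A u⟫).im := by
    have h := congrArg Complex.im (lagrange u u)
    rw [← inner_conj_symm (A u) (u : H)] at h
    simp only [Complex.sub_im, Complex.conj_im, Complex.mul_im, Complex.I_re, Complex.I_im,
      hΓre, hΓim] at h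
    linarith
  -- norm of Γs W via the starred Lagrange identity
  have h2 : ‖Γs W‖ ^ 2 = -2 * (⟪(W : H), A.adjoint W⟫).im := by
    have h := congrArg Complex.im (lagrange_star W W)
    rw [← inner_conj_symm (A.adjoint W) ((W : H) : H)] at h
    simp only [Complex.sub_im, Complex.conj_im, Complex.neg_im, Complex.mul_im,
      Complex.neg_re, Complex.I_re, Complex.I_im, hΓsre, hΓsim] at h
    linarith
  -- adjoint property
  have hadj : ⟪A.adjoint W, (u : H)⟫ = ⟪(W : H), A u⟫ :=
    LinearPMap.adjoint_isFormalAdjoint hd W u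
  -- expand the inner products
  have e1 : ⟪(W : H), A.adjoint W⟫
      = z * ⟪(W : H), (W : H)⟫ + ⟪(W : H), A u⟫ - z * ⟪(W : H), (u : H)⟫ := by
    rw [hAW, inner_add_right, inner_sub_right, inner_smul_right, inner_smul_right]; ring
  have e2 : ⟪(W : H), A u⟫ = (starRingEnd ℂ) z * ⟪(W : H), (u : H)⟫ + ⟪A u, (u : H)⟫
      - (starRingEnd ℂ) z * ⟪(u : H), (u : H)⟫ := by
    rw [← hadj, hAW, inner_add_left, inner_sub_left, inner_smul_left, inner_smul_left]; ring
  have e3 : ⟪A u, (u : H)⟫ = (starRingEnd ℂ) ⟪(u : H), A u⟫ := (inner_conj_symm _ _).symm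
  have e6 : ‖(W : H) - (u : H)‖ ^ 2
      = ‖(W : H)‖ ^ 2 - 2 * (⟪(W : H), (u : H)⟫).re + ‖(u : H)‖ ^ 2 := by
    simpa using norm_sub_sq (𝕜 := ℂ) ((W : H)) ((u : H))
  have i1 := congrArg Complex.im e1
  have i2 := congrArg Complex.im e2
  rw [e3] at i2
  simp only [Complex.add_im, Complex.sub_im, Complex.mul_im, Complex.mul_re,
    Complex.conj_re, Complex.conj_im, hWre, hWim, hure, huim] at i1 i2
  rw [h1, h2, e6]
  linear_combination (-2 : ℝ) * i1 - 2 * i2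

/-- For `u ∈ D(A)` and `Im z > 0`,
`‖Γ_*(A* - z)⁻¹(A - z)u‖² = ‖Γu‖² - 2 (Im z) ‖(A* - z)⁻¹(A - z)u - u‖²`. -/
theorem stmt3 {H E Es : Type*}
    [NormedAddCommGroup H] [InnerProductSpace ℂ H] [CompleteSpace H]
    [NormedAddCommGroup E] [InnerProductSpace ℂ E] [CompleteSpace E]
    [NormedAddCommGroup Es] [InnerProductSpace ℂ Es] [CompleteSpace Es]
    (M : StrausSetting H E Es)
    (u : M.A.domain) (z : ℂ) (hz : 0 < z.im) :
    ‖M.Γs ⟨M.Rs z (M.A u - z • (u : H)), M.Rs_mem z hz _⟩‖ ^ 2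
      = ‖M.Γ u‖ ^ 2 - 2 * z.im * ‖M.Rs z (M.A u - z • (u : H)) - (u : H)‖ ^ 2 := by
  have hAW : M.A.adjoint ⟨M.Rs z (M.A u - z • (u : H)), M.Rs_mem z hz _⟩
      = z • (M.Rs z (M.A u - z • (u : H))) + (M.A u - z • (u : H)) := by
    have h := M.Rs_right z hz (M.A u - z • (u : H))
    rw [sub_eq_iff_eq_add] at h
    rw [h]; abel
  exact stmt3_aux M.A M.dense_dom M.Γ M.Γs M.lagrange M.lagrange_star u z hz
    ⟨M.Rs z (M.A u - z • (u : H)), M.Rs_mem z hz _⟩ hAW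

end
end

section
/- For every z ∈ ℂ with Im z > 0 there exists a unique bounded linear operator S(z) : E → E_* with ‖S(z)‖ ≤ 1 such that S(z)Γu = Γ_*(A* − z)^{-1}(A − z)u for all u ∈ D(A). -/
/-!
For `u ∈ D(A)` put `v = (A* - z)⁻¹(A - z)u`. The Lagrange identities give
`‖Γu‖² = 2 Im⟨Au, u⟩` and `‖Γ_* v‖² = -2 Im⟨A*v, v⟩`; combined with `(A - z)u = (A* - z)v` and
`⟨Au, v⟩ = ⟨u, A*v⟩` they yield `‖Γu‖² - ‖Γ_* v‖² = 2 Im z ‖u - v‖² ≥ 0`. Hence `Γu ↦ Γ_* v` is a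
well-defined contraction on the dense range of `Γ`, and it extends uniquely to all of `E`.
-/

open scoped ComplexInnerProductSpace

noncomputable section

theorem LinearMap.existsUnique_opNorm_le_of_norm_le {𝕜 V E F : Type*}
    [NontriviallyNormedField 𝕜] [AddCommGroup V] [Module 𝕜 V]
    [SeminormedAddCommGroup E] [NormedSpace 𝕜 E]
    [NormedAddCommGroup F] [NormedSpace 𝕜 F] [CompleteSpace F]
    (Φ : V →ₗ[𝕜] F) {Γ : V →ₗ[𝕜] E} (hΓ : DenseRange Γ) {C : ℝ} (hC : 0 ≤ C)
    (hΦ : ∀ v, ‖Φ v‖ ≤ C * ‖Γ v‖) :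
    ∃! S : E →L[𝕜] F, ‖S‖ ≤ C ∧ ∀ v, S (Γ v) = Φ v := by
  refine ⟨Φ.extendOfNorm Γ, ⟨opNorm_extendOfNorm_le hΓ hC hΦ, extendOfNorm_eq hΓ ⟨C, hΦ⟩⟩, ?_⟩
  rintro S ⟨-, hS⟩
  refine ContinuousLinearMap.coeFn_injective <| hΓ.equalizer S.continuous
    (Φ.extendOfNorm Γ).continuous (funext fun v => ?_)
  simp only [Function.comp_apply, hS, extendOfNorm_eq hΓ ⟨C, hΦ⟩]

theorem im_inner_add_im_inner_eq_im_mul_norm_sub_sq {H : Type*}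
    [NormedAddCommGroup H] [InnerProductSpace ℂ H]
    {x y a b : H} {z : ℂ} (hadj : ⟪y, a⟫ = ⟪b, x⟫) (h : a - z • x = b - z • y) :
    (⟪x, a⟫).im + (⟪y, b⟫).im = z.im * ‖x - y‖ ^ 2 := by
  obtain rfl : a = b - z • y + z • x := by rw [← h]; abel
  have him := congrArg Complex.im hadj
  have hbx : (⟪b, x⟫).im = -(⟪x, b⟫).im := inner_im_symm (𝕜 := ℂ) b x
  have hyx : (⟪y, x⟫).im = -(⟪x, y⟫).im := inner_im_symm (𝕜 := ℂ) y x
  have hyx' : (⟪y, x⟫).re = (⟪x, y⟫).re := inner_re_symm (𝕜 := ℂ) y x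
  have hxx : (⟪x, x⟫).im = 0 := inner_self_im (𝕜 := ℂ) x
  have hyy : (⟪y, y⟫).im = 0 := inner_self_im (𝕜 := ℂ) y
  rw [norm_sub_sq (𝕜 := ℂ), ← inner_self_eq_norm_sq (𝕜 := ℂ), ← inner_self_eq_norm_sq (𝕜 := ℂ)]
  simp only [inner_add_right, inner_sub_right, inner_smul_right, Complex.add_im, Complex.sub_im,
    Complex.mul_im, RCLike.re_to_complex, hbx, hyx, hyx', hxx, hyy] at him ⊢
  linear_combination him

namespace StrausSetting

variable {H E Es : Type*}
    [NormedAddCommGroup H] [InnerProductSpace ℂ H] [CompleteSpace H]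
    [NormedAddCommGroup E] [InnerProductSpace ℂ E] [CompleteSpace E]
    [NormedAddCommGroup Es] [InnerProductSpace ℂ Es] [CompleteSpace Es]
    (M : StrausSetting H E Es)

theorem norm_Γ_sq (u : M.A.domain) : ‖M.Γ u‖ ^ 2 = 2 * (⟪(u : H), M.A u⟫).im := by
  have h := congrArg Complex.im (M.lagrange u u)
  have hsymm : (⟪M.A u, (u : H)⟫).im = -(⟪(u : H), M.A u⟫).im := inner_im_symm (𝕜 := ℂ) _ _
  rw [Complex.sub_im, hsymm, Complex.I_mul_im, ← RCLike.re_to_complex, inner_self_eq_norm_sq] at h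
  linarith

theorem norm_Γs_sq (v : M.A.adjoint.domain) :
    ‖M.Γs v‖ ^ 2 = -(2 * (⟪(v : H), M.A.adjoint v⟫).im) := by
  have h := congrArg Complex.im (M.lagrange_star v v)
  have hsymm : (⟪M.A.adjoint v, (v : H)⟫).im = -(⟪(v : H), M.A.adjoint v⟫).im :=
    inner_im_symm (𝕜 := ℂ) _ _
  rw [Complex.sub_im, hsymm, neg_mul, Complex.neg_im, Complex.I_mul_im, ← RCLike.re_to_complex,
    inner_self_eq_norm_sq] at h
  linarith

theorem norm_Γ_sq_sub_norm_Γs_sq {z : ℂ} {u : M.A.domain} {v : M.A.adjoint.domain}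
    (h : M.A u - z • (u : H) = M.A.adjoint v - z • (v : H)) :
    ‖M.Γ u‖ ^ 2 - ‖M.Γs v‖ ^ 2 = 2 * z.im * ‖(u : H) - v‖ ^ 2 := by
  have hadj := LinearPMap.adjoint_isFormalAdjoint M.dense_dom v u
  rw [M.norm_Γ_sq, M.norm_Γs_sq, mul_assoc,
    ← im_inner_add_im_inner_eq_im_mul_norm_sub_sq hadj.symm h]
  ring

def cayley (z : ℂ) (hz : 0 < z.im) : M.A.domain →ₗ[ℂ] M.A.adjoint.domain :=
  LinearMap.codRestrict M.A.adjoint.domain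
    ((M.Rs z).toLinearMap ∘ₗ (M.A.toFun - z • M.A.domain.subtype)) fun _ => M.Rs_mem z hz _

theorem norm_Γs_cayley_le {z : ℂ} (hz : 0 < z.im) (u : M.A.domain) :
    ‖M.Γs (M.cayley z hz u)‖ ≤ ‖M.Γ u‖ := by
  have h := M.norm_Γ_sq_sub_norm_Γs_sq (v := M.cayley z hz u)
    (M.Rs_right z hz (M.A u - z • (u : H))).symm
  have hpos : 0 ≤ 2 * z.im * ‖(u : H) - M.cayley z hz u‖ ^ 2 := by positivity
  exact pow_le_pow_iff_left₀ (norm_nonneg _) (norm_nonneg _) two_ne_zero |>.mp (by linarith)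

end StrausSetting

/-- For every `z` with `Im z > 0` there is a unique bounded operator
`S(z) : E → E_*` with `‖S(z)‖ ≤ 1` such that `S(z)Γu = Γ_*(A* - z)⁻¹(A - z)u` for all
`u ∈ D(A)`. -/
theorem stmt4 {H E Es : Type*}
    [NormedAddCommGroup H] [InnerProductSpace ℂ H] [CompleteSpace H]
    [NormedAddCommGroup E] [InnerProductSpace ℂ E] [CompleteSpace E]
    [NormedAddCommGroup Es] [InnerProductSpace ℂ Es] [CompleteSpace Es]
    (M : StrausSetting H E Es)
    (z : ℂ) (hz : 0 < z.im) :
    ∃! S : E →L[ℂ] Es, ‖S‖ ≤ 1 ∧ ∀ u : M.A.domain,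
      S (M.Γ u) = M.Γs ⟨M.Rs z (M.A u - z • (u : H)), M.Rs_mem z hz _⟩ :=
  (M.Γs ∘ₗ M.cayley z hz).existsUnique_opNorm_le_of_norm_le M.Γ_dense zero_le_one
    fun u => by simpa only [LinearMap.comp_apply, one_mul] using M.norm_Γs_cayley_le hz u

end
end

section
/- Let μ, μ̃ ∈ ℂ be such that A* − μ and A* − μ̃ map D(A*) bijectively onto H with bounded inverses (so that, by taking adjoints, A − μ̄̃ also has a bounded inverse, where μ̄̃ is the complex conjugate of μ̃). Then for every u ∈ D(A): Γ_*(A* − μ)^{-1}(A − μ)u − Γ_*(A* − μ̃)^{-1}(A − μ̃)u = i(μ − μ̃) (Γ_*(A* − μ)^{-1}) (Γ(A − μ̄̃)^{-1})* Γu. -/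
open scoped ComplexInnerProductSpace

noncomputable section

/-- Difference identity for the characteristic function: if `A* - μ` and
`A* - μ̃` have bounded two-sided inverses `Rmu`, `Rmut` (so that by taking adjoints
`A - conj μ̃` has the bounded two-sided inverse `RA`), and `G = Γ(A - conj μ̃)⁻¹`, then
for every `u ∈ D(A)`,
`Γ_*(A* - μ)⁻¹(A - μ)u - Γ_*(A* - μ̃)⁻¹(A - μ̃)u
  = i(μ - μ̃) (Γ_*(A* - μ)⁻¹) (Γ(A - conj μ̃)⁻¹)* Γu`. -/
theorem stmt7 {H E Es : Type*}
    [NormedAddCommGroup H] [InnerProductSpace ℂ H] [CompleteSpace H]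
    [NormedAddCommGroup E] [InnerProductSpace ℂ E] [CompleteSpace E]
    [NormedAddCommGroup Es] [InnerProductSpace ℂ Es] [CompleteSpace Es]
    (M : StrausSetting H E Es) (mu mu' : ℂ)
    (Rmu : H →L[ℂ] H) (hmu_mem : ∀ h : H, Rmu h ∈ M.A.adjoint.domain)
    (hmu_right : ∀ h : H, M.A.adjoint ⟨Rmu h, hmu_mem h⟩ - mu • Rmu h = h)
    (hmu_left : ∀ v : M.A.adjoint.domain, Rmu (M.A.adjoint v - mu • (v : H)) = (v : H))
    (Rmut : H →L[ℂ] H) (hmut_mem : ∀ h : H, Rmut h ∈ M.A.adjoint.domain)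
    (hmut_right : ∀ h : H, M.A.adjoint ⟨Rmut h, hmut_mem h⟩ - mu' • Rmut h = h)
    (hmut_left : ∀ v : M.A.adjoint.domain, Rmut (M.A.adjoint v - mu' • (v : H)) = (v : H))
    (RA : H →L[ℂ] H) (hA_mem : ∀ h : H, RA h ∈ M.A.domain)
    (hA_right : ∀ h : H, M.A ⟨RA h, hA_mem h⟩ - (starRingEnd ℂ mu') • RA h = h)
    (hA_left : ∀ v : M.A.domain, RA (M.A v - (starRingEnd ℂ mu') • (v : H)) = (v : H))
    (G : H →L[ℂ] E) (hG : ∀ h : H, G h = M.Γ ⟨RA h, hA_mem h⟩)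
    (u : M.A.domain) :
    M.Γs ⟨Rmu (M.A u - mu • (u : H)), hmu_mem _⟩
        - M.Γs ⟨Rmut (M.A u - mu' • (u : H)), hmut_mem _⟩
      = (Complex.I * (mu - mu')) •
          M.Γs ⟨Rmu (ContinuousLinearMap.adjoint G (M.Γ u)), hmu_mem _⟩ := by
  classical
  set w : M.A.adjoint.domain := ⟨Rmut (M.A u - mu' • (u : H)), hmut_mem _⟩ with hw
  have hAdj : ∀ (ww : M.A.adjoint.domain) (x : M.A.domain),
      ⟪(M.A.adjoint ww : H), (x : H)⟫ = ⟪(ww : H), M.A x⟫ :=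
    fun ww x => LinearPMap.adjoint_isFormalAdjoint M.dense_dom ww x
  have hAstar_w : M.A.adjoint w = (M.A u - mu' • (u : H)) + mu' • (w : H) := by
    have h1 := hmut_right (M.A u - mu' • (u : H))
    rw [sub_eq_iff_eq_add] at h1
    rw [h1]
  have key : (w : H) - (u : H) = Complex.I • (ContinuousLinearMap.adjoint G (M.Γ u)) := by
    apply ext_inner_left ℂ
    intro h
    set x : M.A.domain := ⟨RA h, hA_mem h⟩ with hx
    have hh : h = M.A x - (starRingEnd ℂ mu') • (x : H) := (hA_right h).symm
    have hGh : G h = M.Γ x := hG h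
    have hAxw : ⟪M.A x, (w : H)⟫ = ⟪(x : H), (M.A.adjoint w : H)⟫ := by
      calc ⟪M.A x, (w : H)⟫ = (starRingEnd ℂ) ⟪(w : H), M.A x⟫ := (inner_conj_symm _ _).symm
        _ = (starRingEnd ℂ) ⟪(M.A.adjoint w : H), (x : H)⟫ := by rw [hAdj w x]
        _ = ⟪(x : H), (M.A.adjoint w : H)⟫ := inner_conj_symm _ _
    have lhs_eq : ⟪h, (w : H) - (u : H)⟫ = ⟪(x : H), M.A u⟫ - ⟪M.A x, (u : H)⟫ := by
      conv_lhs => rw [hh]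
      rw [inner_sub_right, inner_sub_left, inner_sub_left, inner_smul_left, inner_smul_left,
        hAxw, hAstar_w]
      rw [inner_add_right, inner_smul_right, inner_sub_right, inner_smul_right]
      simp only [Complex.conj_conj]
      ring
    calc ⟪h, (w : H) - (u : H)⟫ = ⟪(x : H), M.A u⟫ - ⟪M.A x, (u : H)⟫ := lhs_eq
      _ = Complex.I * ⟪M.Γ x, M.Γ u⟫ := M.lagrange u x
      _ = ⟪h, Complex.I • (ContinuousLinearMap.adjoint G (M.Γ u))⟫ := by
          rw [inner_smul_right, ContinuousLinearMap.adjoint_inner_right, hGh]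
  have e1 : M.A u - mu • (u : H)
      = (M.A.adjoint w - mu • (w : H)) + (mu - mu') • ((w : H) - (u : H)) := by
    rw [hAstar_w]; module
  have hres : Rmu (M.A u - mu • (u : H))
      = Rmut (M.A u - mu' • (u : H)) + (mu - mu') • Rmu ((w : H) - (u : H)) := by
    rw [e1, map_add, map_smul, hmu_left w]
  have hfinal : Rmu (M.A u - mu • (u : H)) - Rmut (M.A u - mu' • (u : H))
      = (Complex.I * (mu - mu')) • Rmu (ContinuousLinearMap.adjoint G (M.Γ u)) := by
    rw [hres, key, map_smul]
    module
  have hsub : ((⟨Rmu (M.A u - mu • (u : H)), hmu_mem _⟩ : M.A.adjoint.domain)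
        - ⟨Rmut (M.A u - mu' • (u : H)), hmut_mem _⟩)
      = (Complex.I * (mu - mu')) •
          (⟨Rmu (ContinuousLinearMap.adjoint G (M.Γ u)), hmu_mem _⟩ : M.A.adjoint.domain) :=
    Subtype.ext (by simpa using hfinal)
  rw [← map_sub, hsub, map_smul]


end
end

section
/- For every z ∈ ℂ with Im z > 0, the adjoint of the characteristic function satisfies S(z)* = S_*(z̄); that is, ⟨S(z)e, f⟩_{E_*} = ⟨e, S_*(z̄)f⟩_E for all e ∈ E and f ∈ E_*. -/
open scoped ComplexInnerProductSpace

noncomputable section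

/-- `S(z)* = S_*(z̄)` for `Im z > 0`, where `S` is the Štraus
characteristic function and `S_*` its counterpart in the lower half-plane. -/
theorem stmt9 {H E Es : Type*}
    [NormedAddCommGroup H] [InnerProductSpace ℂ H] [CompleteSpace H]
    [NormedAddCommGroup E] [InnerProductSpace ℂ E] [CompleteSpace E]
    [NormedAddCommGroup Es] [InnerProductSpace ℂ Es] [CompleteSpace Es]
    (M : StrausSetting H E Es)
    (S : ℂ → E →L[ℂ] Es)
    (hS_norm : ∀ z : ℂ, 0 < z.im → ‖S z‖ ≤ 1)
    (hS : ∀ (z : ℂ), 0 < z.im → ∀ u : M.A.domain,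
      S z (M.Γ u) = M.ΓsRs z (M.A u - z • (u : H)))
    (Ss : ℂ → Es →L[ℂ] E)
    (hSs_norm : ∀ z : ℂ, z.im < 0 → ‖Ss z‖ ≤ 1)
    (hSs : ∀ (z : ℂ), z.im < 0 → ∀ u : M.A.adjoint.domain,
      Ss z (M.Γs u) = M.ΓR z (M.A.adjoint u - z • (u : H)))
    (z : ℂ) (hz : 0 < z.im) :
    ContinuousLinearMap.adjoint (S z) = Ss (starRingEnd ℂ z) := by
  have hzb : (starRingEnd ℂ z).im < 0 := by
    simpa using neg_neg_iff_pos.mpr hz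
  have hadj : ∀ (x : M.A.adjoint.domain) (y : M.A.domain),
      ⟪M.A.adjoint x, (y : H)⟫ = ⟪(x : H), M.A y⟫ :=
    LinearPMap.adjoint_isFormalAdjoint (hT := M.dense_dom)
  -- reduce to agreement on the dense range of Γs
  refine ContinuousLinearMap.coeFn_injective ?_
  apply M.Γs_dense.equalizer (ContinuousLinearMap.adjoint (S z)).continuous
    (Ss (starRingEnd ℂ z)).continuous
  funext v
  simp only [Function.comp_apply]
  -- reduce to inner products against the dense range of Γ
  have key : ∀ u : M.A.domain,
      ⟪(ContinuousLinearMap.adjoint (S z)) (M.Γs v), M.Γ u⟫ =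
      ⟪(Ss (starRingEnd ℂ z)) (M.Γs v), M.Γ u⟫ := by
    intro u
    set w : H := M.A u - z • (u : H) with hw
    set vt : M.A.adjoint.domain := ⟨M.Rs z w, M.Rs_mem z hz w⟩ with hvt
    have hSzu : S z (M.Γ u) = M.Γs vt := by
      rw [hS z hz u, M.ΓsRs_spec z hz]
    have hAvt : M.A.adjoint vt = w + z • (vt : H) := by
      have := M.Rs_right z hz w
      rw [← this]; simp [hvt]
    set g : H := M.A.adjoint v - (starRingEnd ℂ z) • (v : H) with hg
    set ut : M.A.domain := ⟨M.R (starRingEnd ℂ z) g, M.R_mem _ hzb g⟩ with hut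
    have hSsv : Ss (starRingEnd ℂ z) (M.Γs v) = M.Γ ut := by
      rw [hSs _ hzb v, M.ΓR_spec _ hzb]
    have hAut : M.A ut = g + (starRingEnd ℂ z) • (ut : H) := by
      have := M.R_right _ hzb g
      rw [← this]; simp [hut]
    rw [ContinuousLinearMap.adjoint_inner_left, hSzu, hSsv]
    -- the two Lagrange identities
    have L1 := M.lagrange u ut
    have L2 := M.lagrange_star vt v
    -- key inner product identities
    have e1 : ⟪g, (u : H)⟫ = ⟪(v : H), w⟫ := by
      rw [hg, hw, inner_sub_left, inner_sub_right, hadj v u, inner_smul_left,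
        inner_smul_right, Complex.conj_conj]
    have e2 : ⟪g, (vt : H)⟫ = ⟪(ut : H), w⟫ := by
      have hmid : ⟪M.A ut, (vt : H)⟫ = ⟪(ut : H), M.A.adjoint vt⟫ := by
        rw [← inner_conj_symm, ← hadj vt ut, inner_conj_symm]
      calc ⟪g, (vt : H)⟫ = ⟪M.A ut, (vt : H)⟫ - z * ⟪(ut : H), (vt : H)⟫ := by
            rw [hAut, inner_add_left, inner_smul_left, Complex.conj_conj]; ring
        _ = ⟪(ut : H), M.A.adjoint vt⟫ - z * ⟪(ut : H), (vt : H)⟫ := by rw [hmid]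
        _ = ⟪(ut : H), w⟫ := by
            rw [hAvt, inner_add_right, inner_smul_right]; ring
    -- expand the Lagrange identities
    have L1' : Complex.I * ⟪M.Γ ut, M.Γ u⟫
        = ⟪(ut : H), w⟫ - ⟪g, (u : H)⟫ := by
      rw [← L1, hAut, hw, inner_sub_right, inner_add_left, inner_smul_left,
        inner_smul_right, Complex.conj_conj]; ring
    have L2' : -Complex.I * ⟪M.Γs v, M.Γs vt⟫
        = ⟪(v : H), w⟫ - ⟪g, (vt : H)⟫ := by
      rw [← L2, hAvt, hg, inner_sub_left, inner_add_right, inner_smul_left,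
        inner_smul_right, Complex.conj_conj]; ring
    have : Complex.I * ⟪M.Γs v, M.Γs vt⟫ = Complex.I * ⟪M.Γ ut, M.Γ u⟫ := by
      rw [L1']
      linear_combination -L2' + e1 + e2
    exact mul_left_cancel₀ Complex.I_ne_zero this
  -- extend from the dense range of Γ by continuity
  apply ext_inner_right ℂ
  intro e
  have := M.Γ_dense.equalizer
    (continuous_const.inner continuous_id)
    (continuous_const.inner continuous_id)
    (f := (M.Γ : M.A.domain → E))
    (g := fun e : E => ⟪(ContinuousLinearMap.adjoint (S z)) (M.Γs v), e⟫)
    (h := fun e : E => ⟪(Ss (starRingEnd ℂ z)) (M.Γs v), e⟫)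
    (funext fun u => key u)
  exact congrFun this e

end
end

section
/- For all w, z ∈ ℂ with Im w > 0 and Im z > 0, the identity I_E − S(w)*S(z) = i(w̄ − z)(Γ(A − w̄)^{-1})(Γ(A − z̄)^{-1})* holds as bounded operators on E; and for all w, z ∈ ℂ with Im w < 0 and Im z < 0, the identity I_{E_*} − S_*(w)*S_*(z) = −i(w̄ − z)(Γ_*(A* − w̄)^{-1})(Γ_*(A* − z̄)^{-1})* holds as bounded operators on E_*. -/
open scoped ComplexInnerProductSpace

noncomputable section

private lemma key_ring (ε z w' a b c p q r s t g gs : ℂ)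
    (hε : ε * ε = -1)
    (hlag : a - b = ε * g)
    (hlags : (z * c + (s - z * p)) - (w' * c + (t - w' * q)) = -ε * gs)
    (hadj1 : s = w' * p + (b - w' * r))
    (hadj2 : t = z * q + (a - z * r)) :
    g - gs = ε * (w' - z) * (c - p - q + r) := by
  linear_combination ε * hlag + ε * hlags - ε * hadj1 + ε * hadj2 + (g - gs) * hε

private lemma ext_inner_dense {ι F : Type*} [NormedAddCommGroup F] [InnerProductSpace ℂ F]
    {f : ι → F} (hf : DenseRange f) {x y : F} (h : ∀ i, ⟪f i, x⟫ = ⟪f i, y⟫) : x = y := by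
  have hc1 : Continuous fun v : F => (⟪v, x⟫ : ℂ) := continuous_id.inner continuous_const
  have hc2 : Continuous fun v : F => (⟪v, y⟫ : ℂ) := continuous_id.inner continuous_const
  have he : (fun v : F => (⟪v, x⟫ : ℂ)) = fun v : F => (⟪v, y⟫ : ℂ) :=
    hf.equalizer hc1 hc2 (funext fun i => h i)
  exact ext_inner_left ℂ fun v => congrFun he v

private lemma straus_half {H E Es : Type*}
    [NormedAddCommGroup H] [InnerProductSpace ℂ H] [CompleteSpace H]
    [NormedAddCommGroup E] [InnerProductSpace ℂ E] [CompleteSpace E]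
    [NormedAddCommGroup Es] [InnerProductSpace ℂ Es] [CompleteSpace Es]
    (A B : H →ₗ.[ℂ] H)
    (fadj : ∀ (x : B.domain) (y : A.domain), (⟪(B x : H), (y : H)⟫ : ℂ) = ⟪(x : H), (A y : H)⟫)
    (Γ : A.domain →ₗ[ℂ] E) (Γ_dense : DenseRange Γ)
    (Γs : B.domain →ₗ[ℂ] Es)
    (ε : ℂ) (hε : ε * ε = -1) (hconj : starRingEnd ℂ ε = -ε)
    (lagrange : ∀ u v : A.domain,
      (⟪(v : H), (A u : H)⟫ : ℂ) - ⟪(A v : H), (u : H)⟫ = ε * ⟪Γ v, Γ u⟫)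
    (lagrange_star : ∀ u v : B.domain,
      (⟪(v : H), (B u : H)⟫ : ℂ) - ⟪(B v : H), (u : H)⟫ = -ε * ⟪Γs v, Γs u⟫)
    (w z : ℂ)
    (Rw : H →L[ℂ] H) (Rw_mem : ∀ h, Rw h ∈ A.domain)
    (Rw_right : ∀ h, (A ⟨Rw h, Rw_mem h⟩ : H) - (starRingEnd ℂ w) • Rw h = h)
    (Rz : H →L[ℂ] H) (Rz_mem : ∀ h, Rz h ∈ A.domain)
    (Rz_right : ∀ h, (A ⟨Rz h, Rz_mem h⟩ : H) - (starRingEnd ℂ z) • Rz h = h)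
    (Rsw : H →L[ℂ] H) (Rsw_mem : ∀ h, Rsw h ∈ B.domain)
    (Rsw_right : ∀ h, (B ⟨Rsw h, Rsw_mem h⟩ : H) - w • Rsw h = h)
    (Rsz : H →L[ℂ] H) (Rsz_mem : ∀ h, Rsz h ∈ B.domain)
    (Rsz_right : ∀ h, (B ⟨Rsz h, Rsz_mem h⟩ : H) - z • Rsz h = h)
    (ΓRw : H →L[ℂ] E) (ΓRw_spec : ∀ h, ΓRw h = Γ ⟨Rw h, Rw_mem h⟩)
    (ΓRz : H →L[ℂ] E) (ΓRz_spec : ∀ h, ΓRz h = Γ ⟨Rz h, Rz_mem h⟩)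
    (Sw : E →L[ℂ] Es)
    (hSw : ∀ u : A.domain, Sw (Γ u) = Γs ⟨Rsw ((A u : H) - w • (u : H)), Rsw_mem _⟩)
    (Sz : E →L[ℂ] Es)
    (hSz : ∀ u : A.domain, Sz (Γ u) = Γs ⟨Rsz ((A u : H) - z • (u : H)), Rsz_mem _⟩) :
    (1 : E →L[ℂ] E) - ContinuousLinearMap.adjoint Sw ∘L Sz
      = (ε * (starRingEnd ℂ w - z)) • (ΓRw ∘L ContinuousLinearMap.adjoint ΓRz) := by
  -- generic resolvent-adjoint identity
  have L1 : ∀ (ζ : ℂ) (Rζ Rsζ : H →L[ℂ] H) (Rζ_mem : ∀ h, Rζ h ∈ A.domain)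
      (_ : ∀ h, (A ⟨Rζ h, Rζ_mem h⟩ : H) - (starRingEnd ℂ ζ) • Rζ h = h)
      (Rsζ_mem : ∀ h, Rsζ h ∈ B.domain)
      (_ : ∀ h, (B ⟨Rsζ h, Rsζ_mem h⟩ : H) - ζ • Rsζ h = h)
      (h k : H), (⟪Rζ h, k⟫ : ℂ) = ⟪h, Rsζ k⟫ := by
    intro ζ Rζ Rsζ Rζ_mem Rζ_right Rsζ_mem Rsζ_right h k
    have h1 := Rsζ_right k
    have h2 := Rζ_right h
    have h3 : (⟪(Rζ h : H), (B ⟨Rsζ k, Rsζ_mem k⟩ : H)⟫ : ℂ)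
        = ⟪(A ⟨Rζ h, Rζ_mem h⟩ : H), Rsζ k⟫ := by
      rw [← inner_conj_symm, fadj ⟨Rsζ k, Rsζ_mem k⟩ ⟨Rζ h, Rζ_mem h⟩, inner_conj_symm]
    calc (⟪Rζ h, k⟫ : ℂ) = ⟪Rζ h, (B ⟨Rsζ k, Rsζ_mem k⟩ : H) - ζ • Rsζ k⟫ := by rw [h1]
      _ = ⟪(A ⟨Rζ h, Rζ_mem h⟩ : H) - (starRingEnd ℂ ζ) • Rζ h, Rsζ k⟫ := by
          rw [inner_sub_right, inner_sub_left, inner_smul_right, inner_smul_left, h3,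
            Complex.conj_conj]
      _ = ⟪h, Rsζ k⟫ := by rw [h2]
  -- adjoint of ΓR applied to Γ u
  have L2 : ∀ (ζ : ℂ) (Rζ Rsζ : H →L[ℂ] H) (Rζ_mem : ∀ h, Rζ h ∈ A.domain)
      (Rζ_right : ∀ h, (A ⟨Rζ h, Rζ_mem h⟩ : H) - (starRingEnd ℂ ζ) • Rζ h = h)
      (Rsζ_mem : ∀ h, Rsζ h ∈ B.domain)
      (Rsζ_right : ∀ h, (B ⟨Rsζ h, Rsζ_mem h⟩ : H) - ζ • Rsζ h = h)
      (ΓRζ : H →L[ℂ] E) (ΓRζ_spec : ∀ h, ΓRζ h = Γ ⟨Rζ h, Rζ_mem h⟩)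
      (u : A.domain),
      ContinuousLinearMap.adjoint ΓRζ (Γ u)
        = (-ε) • (Rsζ ((A u : H) - ζ • (u : H)) - (u : H)) := by
    intro ζ Rζ Rsζ Rζ_mem Rζ_right Rsζ_mem Rsζ_right ΓRζ ΓRζ_spec u
    apply ext_inner_left ℂ
    intro h
    rw [ContinuousLinearMap.adjoint_inner_right, ΓRζ_spec]
    have lag := lagrange u ⟨Rζ h, Rζ_mem h⟩
    have hAvh : (A ⟨Rζ h, Rζ_mem h⟩ : H) = h + (starRingEnd ℂ ζ) • Rζ h :=
      sub_eq_iff_eq_add.mp (Rζ_right h)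
    have e1 : (⟪(Rζ h : H), (A u : H)⟫ : ℂ) = ⟪h, Rsζ (A u : H)⟫ :=
      L1 ζ Rζ Rsζ Rζ_mem Rζ_right Rsζ_mem Rsζ_right h (A u)
    have e2 : (⟪(Rζ h : H), (u : H)⟫ : ℂ) = ⟪h, Rsζ (u : H)⟫ :=
      L1 ζ Rζ Rsζ Rζ_mem Rζ_right Rsζ_mem Rsζ_right h (u : H)
    have e3 : (⟪(A ⟨Rζ h, Rζ_mem h⟩ : H), (u : H)⟫ : ℂ)
        = ⟪h, (u : H)⟫ + ζ * ⟪h, Rsζ (u : H)⟫ := by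
      rw [hAvh, inner_add_left, inner_smul_left, Complex.conj_conj, e2]
    have lag' : (⟪h, Rsζ (A u : H)⟫ : ℂ) - (⟪h, (u : H)⟫ + ζ * ⟪h, Rsζ (u : H)⟫)
        = ε * ⟪Γ ⟨Rζ h, Rζ_mem h⟩, Γ u⟫ := by rw [← e1, ← e3]; exact lag
    simp only [inner_smul_right, map_sub, map_smul, inner_sub_right]
    linear_combination ε * lag' + (⟪Γ (⟨Rζ h, Rζ_mem h⟩ : A.domain), Γ u⟫ : ℂ) * hε
  -- pointwise identity on range of Γ
  have key : ∀ u : A.domain,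
      ((1 : E →L[ℂ] E) - ContinuousLinearMap.adjoint Sw ∘L Sz) (Γ u)
        = ((ε * (starRingEnd ℂ w - z)) • (ΓRw ∘L ContinuousLinearMap.adjoint ΓRz)) (Γ u) := by
    intro u
    apply ext_inner_dense Γ_dense
    intro v
    set ut : B.domain := ⟨Rsz ((A u : H) - z • (u : H)), Rsz_mem _⟩ with hut
    set vt : B.domain := ⟨Rsw ((A v : H) - w • (v : H)), Rsw_mem _⟩ with hvt
    have hBut : (B ut : H) = ((A u : H) - z • (u : H)) + z • (ut : H) :=
      sub_eq_iff_eq_add.mp (Rsz_right _)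
    have hBvt : (B vt : H) = ((A v : H) - w • (v : H)) + w • (vt : H) :=
      sub_eq_iff_eq_add.mp (Rsw_right _)
    -- LHS
    have lhs_eq : (⟪Γ v, ((1 : E →L[ℂ] E) - ContinuousLinearMap.adjoint Sw ∘L Sz) (Γ u)⟫ : ℂ)
        = ⟪Γ v, Γ u⟫ - ⟪Γs vt, Γs ut⟫ := by
      rw [ContinuousLinearMap.sub_apply, ContinuousLinearMap.one_apply,
        ContinuousLinearMap.comp_apply, inner_sub_right,
        ContinuousLinearMap.adjoint_inner_right, hSw, hSz]
    -- RHS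
    have adj_u : ContinuousLinearMap.adjoint ΓRz (Γ u) = (-ε) • ((ut : H) - (u : H)) :=
      L2 z Rz Rsz Rz_mem Rz_right Rsz_mem Rsz_right ΓRz ΓRz_spec u
    have adj_v : ContinuousLinearMap.adjoint ΓRw (Γ v) = (-ε) • ((vt : H) - (v : H)) :=
      L2 w Rw Rsw Rw_mem Rw_right Rsw_mem Rsw_right ΓRw ΓRw_spec v
    have rhs_eq : (⟪Γ v, ((ε * (starRingEnd ℂ w - z)) •
          (ΓRw ∘L ContinuousLinearMap.adjoint ΓRz)) (Γ u)⟫ : ℂ)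
        = ε * (starRingEnd ℂ w - z) *
            (⟪(vt : H), (ut : H)⟫ - ⟪(vt : H), (u : H)⟫ - ⟪(v : H), (ut : H)⟫
              + ⟪(v : H), (u : H)⟫) := by
      rw [ContinuousLinearMap.smul_apply, inner_smul_right, ContinuousLinearMap.comp_apply,
        ← ContinuousLinearMap.adjoint_inner_left, adj_u, adj_v]
      rw [inner_smul_left, inner_smul_right, map_neg, hconj]
      simp only [inner_sub_left, inner_sub_right]
      linear_combination (-(ε * (starRingEnd ℂ w - z)) *
        ((⟪(vt : H), (ut : H)⟫ : ℂ) - ⟪(vt : H), (u : H)⟫ - ⟪(v : H), (ut : H)⟫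
          + ⟪(v : H), (u : H)⟫)) * hε
    rw [lhs_eq, rhs_eq]
    have hlag := lagrange u v
    have hlags0 := lagrange_star ut vt
    rw [hBut, hBvt] at hlags0
    simp only [inner_add_left, inner_add_right, inner_sub_left, inner_sub_right,
      inner_smul_left, inner_smul_right, Complex.conj_conj] at hlags0
    have f1 := fadj vt u
    rw [hBvt] at f1
    simp only [inner_add_left, inner_sub_left, inner_smul_left, Complex.conj_conj] at f1
    have f2 := fadj ut v
    have f2' : (⟪(v : H), (B ut : H)⟫ : ℂ) = ⟪(A v : H), (ut : H)⟫ := by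
      rw [← inner_conj_symm, f2, inner_conj_symm]
    rw [hBut] at f2'
    simp only [inner_add_right, inner_sub_right, inner_smul_right] at f2'
    have hlags : (z * ⟪(vt : H), (ut : H)⟫ + ((⟪(vt : H), (A u : H)⟫ : ℂ)
          - z * ⟪(vt : H), (u : H)⟫))
        - ((starRingEnd ℂ w) * ⟪(vt : H), (ut : H)⟫ + ((⟪(A v : H), (ut : H)⟫ : ℂ)
          - (starRingEnd ℂ w) * ⟪(v : H), (ut : H)⟫)) = -ε * ⟪Γs vt, Γs ut⟫ := by
      linear_combination hlags0
    have hadj1 : (⟪(vt : H), (A u : H)⟫ : ℂ) = (starRingEnd ℂ w) * ⟪(vt : H), (u : H)⟫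
        + ((⟪(A v : H), (u : H)⟫ : ℂ) - (starRingEnd ℂ w) * ⟪(v : H), (u : H)⟫) := by
      linear_combination - f1
    have hadj2 : (⟪(A v : H), (ut : H)⟫ : ℂ) = z * ⟪(v : H), (ut : H)⟫
        + ((⟪(v : H), (A u : H)⟫ : ℂ) - z * ⟪(v : H), (u : H)⟫) := by
      linear_combination - f2'
    exact key_ring ε z (starRingEnd ℂ w) _ _ _ _ _ _ _ _ _ _ hε hlag hlags hadj1 hadj2
  have hfun : ⇑((1 : E →L[ℂ] E) - ContinuousLinearMap.adjoint Sw ∘L Sz)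
      = ⇑((ε * (starRingEnd ℂ w - z)) • (ΓRw ∘L ContinuousLinearMap.adjoint ΓRz)) :=
    Γ_dense.equalizer (ContinuousLinearMap.continuous _) (ContinuousLinearMap.continuous _)
      (funext fun u => key u)
  exact DFunLike.coe_injective hfun


/-- Hermitian positivity identities: for `Im w, Im z > 0`,
`I_E - S(w)*S(z) = i(w̄ - z) (Γ(A - w̄)⁻¹)(Γ(A - z̄)⁻¹)*`, and for `Im w, Im z < 0`,
`I_{E_*} - S_*(w)*S_*(z) = -i(w̄ - z) (Γ_*(A* - w̄)⁻¹)(Γ_*(A* - z̄)⁻¹)*`. -/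
theorem stmt10 {H E Es : Type*}
    [NormedAddCommGroup H] [InnerProductSpace ℂ H] [CompleteSpace H]
    [NormedAddCommGroup E] [InnerProductSpace ℂ E] [CompleteSpace E]
    [NormedAddCommGroup Es] [InnerProductSpace ℂ Es] [CompleteSpace Es]
    (M : StrausSetting H E Es)
    (S : ℂ → E →L[ℂ] Es)
    (hS_norm : ∀ z : ℂ, 0 < z.im → ‖S z‖ ≤ 1)
    (hS : ∀ (z : ℂ), 0 < z.im → ∀ u : M.A.domain,
      S z (M.Γ u) = M.ΓsRs z (M.A u - z • (u : H)))
    (Ss : ℂ → Es →L[ℂ] E)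
    (hSs_norm : ∀ z : ℂ, z.im < 0 → ‖Ss z‖ ≤ 1)
    (hSs : ∀ (z : ℂ), z.im < 0 → ∀ u : M.A.adjoint.domain,
      Ss z (M.Γs u) = M.ΓR z (M.A.adjoint u - z • (u : H))) :
    (∀ w z : ℂ, 0 < w.im → 0 < z.im →
      (1 : E →L[ℂ] E) - ContinuousLinearMap.adjoint (S w) ∘L S z
        = (Complex.I * (starRingEnd ℂ w - z)) •
            (M.ΓR (starRingEnd ℂ w) ∘L
              ContinuousLinearMap.adjoint (M.ΓR (starRingEnd ℂ z)))) ∧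
    (∀ w z : ℂ, w.im < 0 → z.im < 0 →
      (1 : Es →L[ℂ] Es) - ContinuousLinearMap.adjoint (Ss w) ∘L Ss z
        = (-(Complex.I * (starRingEnd ℂ w - z))) •
            (M.ΓsRs (starRingEnd ℂ w) ∘L
              ContinuousLinearMap.adjoint (M.ΓsRs (starRingEnd ℂ z)))) := by
  constructor
  · intro w z hw hz
    have hw' : (starRingEnd ℂ w).im < 0 := by simp [Complex.conj_im]; linarith
    have hz' : (starRingEnd ℂ z).im < 0 := by simp [Complex.conj_im]; linarith
    exact straus_half M.A M.A.adjoint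
      (fun x y => M.A.adjoint_isFormalAdjoint M.dense_dom x y)
      M.Γ M.Γ_dense M.Γs Complex.I Complex.I_mul_I Complex.conj_I
      M.lagrange M.lagrange_star w z
      (M.R (starRingEnd ℂ w)) (M.R_mem _ hw') (M.R_right _ hw')
      (M.R (starRingEnd ℂ z)) (M.R_mem _ hz') (M.R_right _ hz')
      (M.Rs w) (M.Rs_mem w hw) (M.Rs_right w hw)
      (M.Rs z) (M.Rs_mem z hz) (M.Rs_right z hz)
      (M.ΓR (starRingEnd ℂ w)) (M.ΓR_spec _ hw')
      (M.ΓR (starRingEnd ℂ z)) (M.ΓR_spec _ hz')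
      (S w) (fun u => (hS w hw u).trans (M.ΓsRs_spec w hw _))
      (S z) (fun u => (hS z hz u).trans (M.ΓsRs_spec z hz _))
  · intro w z hw hz
    have hw' : 0 < (starRingEnd ℂ w).im := by simp [Complex.conj_im]; linarith
    have hz' : 0 < (starRingEnd ℂ z).im := by simp [Complex.conj_im]; linarith
    have hcoef : -(Complex.I * (starRingEnd ℂ w - z))
        = (-Complex.I) * (starRingEnd ℂ w - z) := by ring
    rw [hcoef]
    exact straus_half M.A.adjoint M.A
      (fun x y => (M.A.adjoint_isFormalAdjoint M.dense_dom).symm x y)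
      M.Γs M.Γs_dense M.Γ (-Complex.I)
      (by rw [neg_mul_neg, Complex.I_mul_I]) (by simp)
      M.lagrange_star (fun u v => by rw [neg_neg]; exact M.lagrange u v) w z
      (M.Rs (starRingEnd ℂ w)) (M.Rs_mem _ hw') (M.Rs_right _ hw')
      (M.Rs (starRingEnd ℂ z)) (M.Rs_mem _ hz') (M.Rs_right _ hz')
      (M.R w) (M.R_mem w hw) (M.R_right w hw)
      (M.R z) (M.R_mem z hz) (M.R_right z hz)
      (M.ΓsRs (starRingEnd ℂ w)) (M.ΓsRs_spec _ hw')
      (M.ΓsRs (starRingEnd ℂ z)) (M.ΓsRs_spec _ hz')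
      (Ss w) (fun u => (hSs w hw u).trans (M.ΓR_spec w hw _))
      (Ss z) (fun u => (hSs z hz u).trans (M.ΓR_spec z hz _))


end
end

section
/- For all μ, z ∈ ℂ with Im μ < 0 and Im z < 0, the identities (Γ_*(A* − μ̄)^{-1})* S(z̄) = [I_H − (z̄ − μ)(A − μ)^{-1}] (Γ(A − z)^{-1})* (as bounded operators from E to H) and (Γ(A − μ)^{-1})* S_*(z) = [I_H − (z − μ̄)(A* − μ̄)^{-1}] (Γ_*(A* − z̄)^{-1})* (as bounded operators from E_* to H) hold. -/
open scoped ComplexInnerProductSpace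

noncomputable section

section Helpers

variable {H : Type*} [NormedAddCommGroup H] [InnerProductSpace ℂ H] [CompleteSpace H]

/-- Formal-adjoint pairing: `⟪A* x, y⟫ = ⟪x, A y⟫`. -/
lemma MDO.formal (M : MDO H) (x : M.A.adjoint.domain) (y : M.A.domain) :
    ⟪M.A.adjoint x, (y : H)⟫ = ⟪(x : H), M.A y⟫ :=
  LinearPMap.adjoint_isFormalAdjoint M.dense_dom x y

lemma MDO.formal' (M : MDO H) (x : M.A.domain) (y : M.A.adjoint.domain) :
    ⟪(x : H), M.A.adjoint y⟫ = ⟪M.A x, (y : H)⟫ := by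
  rw [← inner_conj_symm, M.formal y x, inner_conj_symm]

/-- `(A - μ)⁻¹` is adjoint to `(A* - μ̄)⁻¹`. -/
lemma MDO.R_adj (M : MDO H) {mu : ℂ} (hmu : mu.im < 0)
    (hmuc : 0 < (starRingEnd ℂ mu).im) (a k : H) :
    ⟪M.R mu a, k⟫ = ⟪a, M.Rs (starRingEnd ℂ mu) k⟫ := by
  have hx := M.R_right mu hmu a
  have hy := M.Rs_right _ hmuc k
  calc ⟪M.R mu a, k⟫
      = ⟪(((⟨M.R mu a, M.R_mem mu hmu a⟩ : M.A.domain)) : H),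
          M.A.adjoint (⟨M.Rs (starRingEnd ℂ mu) k, M.Rs_mem _ hmuc k⟩ : M.A.adjoint.domain)
            - starRingEnd ℂ mu • (M.Rs (starRingEnd ℂ mu) k)⟫ := by rw [hy]
    _ = ⟪M.A (⟨M.R mu a, M.R_mem mu hmu a⟩ : M.A.domain), M.Rs (starRingEnd ℂ mu) k⟫
          - starRingEnd ℂ mu * ⟪M.R mu a, M.Rs (starRingEnd ℂ mu) k⟫ := by
        rw [inner_sub_right, inner_smul_right, M.formal']
    _ = ⟪M.A (⟨M.R mu a, M.R_mem mu hmu a⟩ : M.A.domain) - mu • (M.R mu a),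
          M.Rs (starRingEnd ℂ mu) k⟫ := by
        rw [inner_sub_left, inner_smul_left]
    _ = ⟪a, M.Rs (starRingEnd ℂ mu) k⟫ := by rw [hx]

lemma MDO.R_adj' (M : MDO H) {mu : ℂ} (hmu : mu.im < 0)
    (hmuc : 0 < (starRingEnd ℂ mu).im) (a k : H) :
    ⟪k, M.R mu a⟫ = ⟪M.Rs (starRingEnd ℂ mu) k, a⟫ := by
  rw [← inner_conj_symm, M.R_adj hmu hmuc a k, inner_conj_symm]

end Helpers
/-- For `Im μ < 0` and `Im z < 0`:
`(Γ_*(A* - μ̄)⁻¹)* S(z̄) = [I - (z̄ - μ)(A - μ)⁻¹](Γ(A - z)⁻¹)*` and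
`(Γ(A - μ)⁻¹)* S_*(z) = [I - (z - μ̄)(A* - μ̄)⁻¹](Γ_*(A* - z̄)⁻¹)*`. -/
theorem stmt11 {H E Es : Type*}
    [NormedAddCommGroup H] [InnerProductSpace ℂ H] [CompleteSpace H]
    [NormedAddCommGroup E] [InnerProductSpace ℂ E] [CompleteSpace E]
    [NormedAddCommGroup Es] [InnerProductSpace ℂ Es] [CompleteSpace Es]
    (M : StrausSetting H E Es)
    (S : ℂ → E →L[ℂ] Es)
    (hS_norm : ∀ z : ℂ, 0 < z.im → ‖S z‖ ≤ 1)
    (hS : ∀ (z : ℂ), 0 < z.im → ∀ u : M.A.domain,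
      S z (M.Γ u) = M.ΓsRs z (M.A u - z • (u : H)))
    (Ss : ℂ → Es →L[ℂ] E)
    (hSs_norm : ∀ z : ℂ, z.im < 0 → ‖Ss z‖ ≤ 1)
    (hSs : ∀ (z : ℂ), z.im < 0 → ∀ u : M.A.adjoint.domain,
      Ss z (M.Γs u) = M.ΓR z (M.A.adjoint u - z • (u : H)))
    (mu z : ℂ) (hmu : mu.im < 0) (hz : z.im < 0) :
    (ContinuousLinearMap.adjoint (M.ΓsRs (starRingEnd ℂ mu)) ∘L S (starRingEnd ℂ z)
        = ((1 : H →L[ℂ] H) - (starRingEnd ℂ z - mu) • M.R mu) ∘L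
            ContinuousLinearMap.adjoint (M.ΓR z)) ∧
    (ContinuousLinearMap.adjoint (M.ΓR mu) ∘L Ss z
        = ((1 : H →L[ℂ] H) - (z - starRingEnd ℂ mu) • M.Rs (starRingEnd ℂ mu)) ∘L
            ContinuousLinearMap.adjoint (M.ΓsRs (starRingEnd ℂ z))) := by
  have hzc : 0 < (starRingEnd ℂ z).im := by rw [Complex.conj_im]; linarith
  have hmuc : 0 < (starRingEnd ℂ mu).im := by rw [Complex.conj_im]; linarith
  constructor
  · -- First identity
    have key : ∀ u : M.A.domain,
        (ContinuousLinearMap.adjoint (M.ΓsRs (starRingEnd ℂ mu)) ∘L S (starRingEnd ℂ z))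
            (M.Γ u)
          = (((1 : H →L[ℂ] H) - (starRingEnd ℂ z - mu) • M.R mu) ∘L
              ContinuousLinearMap.adjoint (M.ΓR z)) (M.Γ u) := by
      intro u
      refine ext_inner_left ℂ fun h => ?_
      have hAv := M.Rs_right (starRingEnd ℂ mu) hmuc h
      rw [sub_eq_iff_eq_add] at hAv
      have hAw := M.Rs_right (starRingEnd ℂ z) hzc (M.A u - starRingEnd ℂ z • (u : H))
      rw [sub_eq_iff_eq_add] at hAw
      have hAp := M.R_right z hz h
      rw [sub_eq_iff_eq_add] at hAp
      have hApv := M.R_right z hz (M.Rs (starRingEnd ℂ mu) h)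
      rw [sub_eq_iff_eq_add] at hApv
      have e1 : ⟪h, (ContinuousLinearMap.adjoint (M.ΓsRs (starRingEnd ℂ mu)) ∘L
            S (starRingEnd ℂ z)) (M.Γ u)⟫
          = ⟪M.Γs ⟨M.Rs (starRingEnd ℂ mu) h, M.Rs_mem _ hmuc h⟩,
              M.Γs ⟨M.Rs (starRingEnd ℂ z) (M.A u - starRingEnd ℂ z • (u : H)),
                M.Rs_mem _ hzc _⟩⟫ := by
        rw [ContinuousLinearMap.comp_apply, ContinuousLinearMap.adjoint_inner_right,
          hS _ hzc u, M.ΓsRs_spec _ hzc _, M.ΓsRs_spec _ hmuc h]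
      have e2 : ⟪h, (((1 : H →L[ℂ] H) - (starRingEnd ℂ z - mu) • M.R mu) ∘L
            ContinuousLinearMap.adjoint (M.ΓR z)) (M.Γ u)⟫
          = ⟪M.Γ ⟨M.R z h, M.R_mem z hz h⟩, M.Γ u⟫
            - (starRingEnd ℂ z - mu) *
                ⟪M.Γ ⟨M.R z (M.Rs (starRingEnd ℂ mu) h), M.R_mem z hz _⟩, M.Γ u⟫ := by
        rw [ContinuousLinearMap.comp_apply, ContinuousLinearMap.sub_apply,
          ContinuousLinearMap.one_apply, ContinuousLinearMap.smul_apply, inner_sub_right,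
          inner_smul_right, ContinuousLinearMap.adjoint_inner_right, M.ΓR_spec z hz h,
          M.R_adj' hmu hmuc, ContinuousLinearMap.adjoint_inner_right,
          M.ΓR_spec z hz (M.Rs (starRingEnd ℂ mu) h)]
      rw [e1, e2]
      -- Lagrange identities, massaged into atom form
      have hvAu : ⟪M.Rs (starRingEnd ℂ mu) h, M.A u⟫
          = ⟪h, (u : H)⟫ + mu * ⟪M.Rs (starRingEnd ℂ mu) h, (u : H)⟫ := by
        have h1 := M.formal ⟨M.Rs (starRingEnd ℂ mu) h, M.Rs_mem _ hmuc h⟩ u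
        rw [hAv] at h1
        simp only [inner_add_left, inner_smul_left, Complex.conj_conj] at h1
        exact h1.symm
      have h0 := M.lagrange_star
        ⟨M.Rs (starRingEnd ℂ z) (M.A u - starRingEnd ℂ z • (u : H)), M.Rs_mem _ hzc _⟩
        ⟨M.Rs (starRingEnd ℂ mu) h, M.Rs_mem _ hmuc h⟩
      rw [hAw, hAv] at h0
      simp only [inner_add_right, inner_smul_right, inner_add_left, inner_smul_left,
        inner_sub_right, Complex.conj_conj] at h0
      rw [← M.R_adj hz hzc h (M.A u - starRingEnd ℂ z • (u : H)),
        ← M.R_adj hz hzc (M.Rs (starRingEnd ℂ mu) h)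
          (M.A u - starRingEnd ℂ z • (u : H))] at h0
      simp only [inner_sub_right, inner_smul_right] at h0
      rw [hvAu] at h0
      have h2 := M.lagrange u ⟨M.R z h, M.R_mem z hz h⟩
      rw [hAp] at h2
      simp only [inner_add_left, inner_smul_left] at h2
      have h3 := M.lagrange u ⟨M.R z (M.Rs (starRingEnd ℂ mu) h), M.R_mem z hz _⟩
      rw [hApv] at h3
      simp only [inner_add_left, inner_smul_left] at h3
      linear_combination (-Complex.I) * h0 + (-Complex.I) * h2
        + ((starRingEnd ℂ z - mu) * Complex.I) * h3
        + (⟪M.Γs ⟨M.Rs (starRingEnd ℂ mu) h, M.Rs_mem _ hmuc h⟩,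
              M.Γs ⟨M.Rs (starRingEnd ℂ z) (M.A u - starRingEnd ℂ z • (u : H)),
                M.Rs_mem _ hzc _⟩⟫
            - ⟪M.Γ ⟨M.R z h, M.R_mem z hz h⟩, M.Γ u⟫
            + (starRingEnd ℂ z - mu) *
                ⟪M.Γ ⟨M.R z (M.Rs (starRingEnd ℂ mu) h), M.R_mem z hz _⟩, M.Γ u⟫)
          * Complex.I_sq
    exact ContinuousLinearMap.ext fun e => congrFun
      (M.Γ_dense.equalizer (ContinuousLinearMap.continuous _)
        (ContinuousLinearMap.continuous _) (funext key)) e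
  · -- Second identity
    have key : ∀ u : M.A.adjoint.domain,
        (ContinuousLinearMap.adjoint (M.ΓR mu) ∘L Ss z) (M.Γs u)
          = (((1 : H →L[ℂ] H) - (z - starRingEnd ℂ mu) • M.Rs (starRingEnd ℂ mu)) ∘L
              ContinuousLinearMap.adjoint (M.ΓsRs (starRingEnd ℂ z))) (M.Γs u) := by
      intro u
      refine ext_inner_left ℂ fun h => ?_
      have hAp' := M.R_right mu hmu h
      rw [sub_eq_iff_eq_add] at hAp'
      have hAw' := M.R_right z hz (M.A.adjoint u - z • (u : H))
      rw [sub_eq_iff_eq_add] at hAw'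
      have hAv' := M.Rs_right (starRingEnd ℂ z) hzc h
      rw [sub_eq_iff_eq_add] at hAv'
      have hAvv' := M.Rs_right (starRingEnd ℂ z) hzc (M.R mu h)
      rw [sub_eq_iff_eq_add] at hAvv'
      have e1 : ⟪h, (ContinuousLinearMap.adjoint (M.ΓR mu) ∘L Ss z) (M.Γs u)⟫
          = ⟪M.Γ ⟨M.R mu h, M.R_mem mu hmu h⟩,
              M.Γ ⟨M.R z (M.A.adjoint u - z • (u : H)), M.R_mem z hz _⟩⟫ := by
        rw [ContinuousLinearMap.comp_apply, ContinuousLinearMap.adjoint_inner_right,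
          hSs z hz u, M.ΓR_spec z hz _, M.ΓR_spec mu hmu h]
      have e2 : ⟪h, (((1 : H →L[ℂ] H) - (z - starRingEnd ℂ mu) •
              M.Rs (starRingEnd ℂ mu)) ∘L
            ContinuousLinearMap.adjoint (M.ΓsRs (starRingEnd ℂ z))) (M.Γs u)⟫
          = ⟪M.Γs ⟨M.Rs (starRingEnd ℂ z) h, M.Rs_mem _ hzc h⟩, M.Γs u⟫
            - (z - starRingEnd ℂ mu) *
                ⟪M.Γs ⟨M.Rs (starRingEnd ℂ z) (M.R mu h), M.Rs_mem _ hzc _⟩,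
                  M.Γs u⟫ := by
        rw [ContinuousLinearMap.comp_apply, ContinuousLinearMap.sub_apply,
          ContinuousLinearMap.one_apply, ContinuousLinearMap.smul_apply, inner_sub_right,
          inner_smul_right, ContinuousLinearMap.adjoint_inner_right,
          M.ΓsRs_spec _ hzc h, ← M.R_adj hmu hmuc h _,
          ContinuousLinearMap.adjoint_inner_right, M.ΓsRs_spec _ hzc (M.R mu h)]
      rw [e1, e2]
      have hpAu : ⟪M.R mu h, M.A.adjoint u⟫
          = ⟪h, (u : H)⟫ + starRingEnd ℂ mu * ⟪M.R mu h, (u : H)⟫ := by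
        have h1 := M.formal' ⟨M.R mu h, M.R_mem mu hmu h⟩ u
        rw [hAp'] at h1
        simp only [inner_add_left, inner_smul_left] at h1
        exact h1
      have h0 := M.lagrange
        ⟨M.R z (M.A.adjoint u - z • (u : H)), M.R_mem z hz _⟩
        ⟨M.R mu h, M.R_mem mu hmu h⟩
      rw [hAw', hAp'] at h0
      simp only [inner_add_right, inner_smul_right, inner_add_left, inner_smul_left,
        inner_sub_right] at h0
      rw [M.R_adj' hz hzc (M.A.adjoint u - z • (u : H)) (M.R mu h),
        M.R_adj' hz hzc (M.A.adjoint u - z • (u : H)) h] at h0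
      simp only [inner_sub_right, inner_smul_right] at h0
      rw [hpAu] at h0
      have h2 := M.lagrange_star u ⟨M.Rs (starRingEnd ℂ z) h, M.Rs_mem _ hzc h⟩
      rw [hAv'] at h2
      simp only [inner_add_left, inner_smul_left, Complex.conj_conj] at h2
      have h3 := M.lagrange_star u
        ⟨M.Rs (starRingEnd ℂ z) (M.R mu h), M.Rs_mem _ hzc _⟩
      rw [hAvv'] at h3
      simp only [inner_add_left, inner_smul_left, Complex.conj_conj] at h3
      linear_combination Complex.I * h0 + Complex.I * h2
        + (-(z - starRingEnd ℂ mu) * Complex.I) * h3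
        + (⟪M.Γ ⟨M.R mu h, M.R_mem mu hmu h⟩,
              M.Γ ⟨M.R z (M.A.adjoint u - z • (u : H)), M.R_mem z hz _⟩⟫
            - ⟪M.Γs ⟨M.Rs (starRingEnd ℂ z) h, M.Rs_mem _ hzc h⟩, M.Γs u⟫
            + (z - starRingEnd ℂ mu) *
                ⟪M.Γs ⟨M.Rs (starRingEnd ℂ z) (M.R mu h), M.Rs_mem _ hzc _⟩, M.Γs u⟫)
          * Complex.I_sq
    exact ContinuousLinearMap.ext fun e => congrFun
      (M.Γs_dense.equalizer (ContinuousLinearMap.continuous _)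
        (ContinuousLinearMap.continuous _) (funext key)) e

end
end

section
/- Let u ∈ H, a ∈ E and b ∈ E_*. If u + (Γ_*(A* + μ₀)^{-1})* b ∈ D(A) for some μ₀ ∈ ℂ with Im μ₀ < 0, then u + (Γ_*(A* + μ)^{-1})* b ∈ D(A) for every μ ∈ ℂ with Im μ < 0. Similarly, if u + (Γ(A + λ₀)^{-1})* a ∈ D(A*) for some λ₀ ∈ ℂ with Im λ₀ > 0, then u + (Γ(A + λ)^{-1})* a ∈ D(A*) for every λ ∈ ℂ with Im λ > 0. -/
open scoped ComplexInnerProductSpace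

noncomputable section

section Aux

variable {H E Es : Type*}
    [NormedAddCommGroup H] [InnerProductSpace ℂ H] [CompleteSpace H]
    [NormedAddCommGroup E] [InnerProductSpace ℂ E] [CompleteSpace E]
    [NormedAddCommGroup Es] [InnerProductSpace ℂ Es] [CompleteSpace Es]

/-- The fundamental adjoint pairing. -/
lemma MDO.pairing (M : MDO H) (v : M.A.adjoint.domain) (u : M.A.domain) :
    ⟪M.A.adjoint v, (u : H)⟫ = ⟪(v : H), M.A u⟫ :=
  LinearPMap.adjoint_isFormalAdjoint M.dense_dom v u

/-- `R (conj z)` is the adjoint of `Rs z` for `Im z > 0`. -/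
lemma MDO.R_conj_inner (M : MDO H) (z : ℂ) (hz : 0 < z.im) (h k : H) :
    ⟪M.R (starRingEnd ℂ z) h, k⟫ = ⟪h, M.Rs z k⟫ := by
  set w := starRingEnd ℂ z with hw
  have hwim : w.im < 0 := by
    simp only [hw, Complex.conj_im]; linarith
  set u : M.A.domain := ⟨M.R w h, M.R_mem w hwim h⟩ with hu
  set v : M.A.adjoint.domain := ⟨M.Rs z k, M.Rs_mem z hz k⟩ with hv
  have hAu : M.A u = h + w • M.R w h := by
    have := M.R_right w hwim h
    have := sub_eq_iff_eq_add.mp this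
    rw [this]
  have hAv : M.A.adjoint v = k + z • M.Rs z k := by
    have := M.Rs_right z hz k
    have := sub_eq_iff_eq_add.mp this
    rw [this]
  have key := M.pairing v u
  rw [hAu, hAv] at key
  simp only [inner_add_left, inner_add_right, inner_smul_left, inner_smul_right] at key
  rw [← hw] at key
  have key2 : ⟪k, M.R w h⟫ = ⟪M.Rs z k, h⟫ := by
    linear_combination key
  calc ⟪M.R w h, k⟫ = starRingEnd ℂ ⟪k, M.R w h⟫ := (inner_conj_symm _ _).symm
    _ = starRingEnd ℂ ⟪M.Rs z k, h⟫ := by rw [key2]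
    _ = ⟪h, M.Rs z k⟫ := inner_conj_symm _ _

/-- `Rs (conj z)` is the adjoint of `R z` for `Im z < 0`. -/
lemma MDO.Rs_conj_inner (M : MDO H) (z : ℂ) (hz : z.im < 0) (h k : H) :
    ⟪M.Rs (starRingEnd ℂ z) h, k⟫ = ⟪h, M.R z k⟫ := by
  have hz' : 0 < (starRingEnd ℂ z).im := by simp [Complex.conj_im]; linarith
  have := M.R_conj_inner (starRingEnd ℂ z) hz' k h
  rw [Complex.conj_conj] at this
  calc ⟪M.Rs (starRingEnd ℂ z) h, k⟫ = starRingEnd ℂ ⟪k, M.Rs (starRingEnd ℂ z) h⟫ :=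
        (inner_conj_symm _ _).symm
    _ = starRingEnd ℂ ⟪M.R z k, h⟫ := by rw [this]
    _ = ⟪h, M.R z k⟫ := inner_conj_symm _ _

/-- Resolvent identity for `Rs`. -/
lemma MDO.Rs_resolvent (M : MDO H) (z₁ z₂ : ℂ) (h₁ : 0 < z₁.im) (h₂ : 0 < z₂.im) (h : H) :
    M.Rs z₁ h = M.Rs z₂ (h + (z₁ - z₂) • M.Rs z₁ h) := by
  set u : M.A.adjoint.domain := ⟨M.Rs z₁ h, M.Rs_mem z₁ h₁ h⟩ with hu
  have key := M.Rs_left z₂ h₂ u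
  have hAu : M.A.adjoint u = h + z₁ • M.Rs z₁ h := by
    have := sub_eq_iff_eq_add.mp (M.Rs_right z₁ h₁ h)
    rw [this]
  rw [hAu] at key
  have : h + z₁ • M.Rs z₁ h - z₂ • (u : H) = h + (z₁ - z₂) • M.Rs z₁ h := by
    simp only [hu, sub_smul]; abel
  rw [this] at key
  exact key.symm

/-- Resolvent identity for `R`. -/
lemma MDO.R_resolvent (M : MDO H) (z₁ z₂ : ℂ) (h₁ : z₁.im < 0) (h₂ : z₂.im < 0) (h : H) :
    M.R z₁ h = M.R z₂ (h + (z₁ - z₂) • M.R z₁ h) := by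
  set u : M.A.domain := ⟨M.R z₁ h, M.R_mem z₁ h₁ h⟩ with hu
  have key := M.R_left z₂ h₂ u
  have hAu : M.A u = h + z₁ • M.R z₁ h := by
    have := sub_eq_iff_eq_add.mp (M.R_right z₁ h₁ h)
    rw [this]
  rw [hAu] at key
  have : h + z₁ • M.R z₁ h - z₂ • (u : H) = h + (z₁ - z₂) • M.R z₁ h := by
    simp only [hu, sub_smul]; abel
  rw [this] at key
  exact key.symm

/-- `ΓsRs z₁ h = ΓsRs z₂ (h + (z₁ - z₂) • Rs z₁ h)` for `Im z₁, Im z₂ > 0`. -/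
lemma StrausSetting.ΓsRs_resolvent (M : StrausSetting H E Es) (z₁ z₂ : ℂ)
    (h₁ : 0 < z₁.im) (h₂ : 0 < z₂.im) (h : H) :
    M.ΓsRs z₁ h = M.ΓsRs z₂ (h + (z₁ - z₂) • M.Rs z₁ h) := by
  rw [M.ΓsRs_spec z₁ h₁ h, M.ΓsRs_spec z₂ h₂ _]
  congr 1
  exact Subtype.ext (M.Rs_resolvent z₁ z₂ h₁ h₂ h)

lemma StrausSetting.ΓR_resolvent (M : StrausSetting H E Es) (z₁ z₂ : ℂ)
    (h₁ : z₁.im < 0) (h₂ : z₂.im < 0) (h : H) :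
    M.ΓR z₁ h = M.ΓR z₂ (h + (z₁ - z₂) • M.R z₁ h) := by
  rw [M.ΓR_spec z₁ h₁ h, M.ΓR_spec z₂ h₂ _]
  congr 1
  exact Subtype.ext (M.R_resolvent z₁ z₂ h₁ h₂ h)

/-- Key identity for the adjoints. -/
lemma StrausSetting.adjoint_ΓsRs_diff (M : StrausSetting H E Es) (z₁ z₂ : ℂ)
    (h₁ : 0 < z₁.im) (h₂ : 0 < z₂.im) (b : Es) :
    ContinuousLinearMap.adjoint (M.ΓsRs z₁) b =
      ContinuousLinearMap.adjoint (M.ΓsRs z₂) b +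
        (starRingEnd ℂ (z₁ - z₂)) •
          M.R (starRingEnd ℂ z₁) (ContinuousLinearMap.adjoint (M.ΓsRs z₂) b) := by
  apply ext_inner_right ℂ
  intro h
  rw [ContinuousLinearMap.adjoint_inner_left, M.ΓsRs_resolvent z₁ z₂ h₁ h₂ h]
  rw [← ContinuousLinearMap.adjoint_inner_left]
  simp only [inner_add_left, inner_add_right, inner_smul_left, inner_smul_right,
    Complex.conj_conj, M.toMDO.R_conj_inner z₁ h₁]

lemma StrausSetting.adjoint_ΓR_diff (M : StrausSetting H E Es) (z₁ z₂ : ℂ)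
    (h₁ : z₁.im < 0) (h₂ : z₂.im < 0) (a : E) :
    ContinuousLinearMap.adjoint (M.ΓR z₁) a =
      ContinuousLinearMap.adjoint (M.ΓR z₂) a +
        (starRingEnd ℂ (z₁ - z₂)) •
          M.Rs (starRingEnd ℂ z₁) (ContinuousLinearMap.adjoint (M.ΓR z₂) a) := by
  apply ext_inner_right ℂ
  intro h
  rw [ContinuousLinearMap.adjoint_inner_left, M.ΓR_resolvent z₁ z₂ h₁ h₂ h]
  rw [← ContinuousLinearMap.adjoint_inner_left]
  simp only [inner_add_left, inner_add_right, inner_smul_left, inner_smul_right,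
    Complex.conj_conj, M.toMDO.Rs_conj_inner z₁ h₁]

end Aux

/-- Independence of the domain conditions in the definition of the
dilation domain from the regularisation parameters: here
`(Γ_*(A* + μ)⁻¹)* = (ΓsRs (-μ))*` for `Im μ < 0` and
`(Γ(A + λ)⁻¹)* = (ΓR (-λ))*` for `Im λ > 0`. -/
theorem stmt13 {H E Es : Type*}
    [NormedAddCommGroup H] [InnerProductSpace ℂ H] [CompleteSpace H]
    [NormedAddCommGroup E] [InnerProductSpace ℂ E] [CompleteSpace E]
    [NormedAddCommGroup Es] [InnerProductSpace ℂ Es] [CompleteSpace Es]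
    (M : StrausSetting H E Es) (u : H) (a : E) (b : Es) :
    ((∃ mu0 : ℂ, mu0.im < 0 ∧
        u + ContinuousLinearMap.adjoint (M.ΓsRs (-mu0)) b ∈ M.A.domain) →
      ∀ mu : ℂ, mu.im < 0 →
        u + ContinuousLinearMap.adjoint (M.ΓsRs (-mu)) b ∈ M.A.domain) ∧
    ((∃ lam0 : ℂ, 0 < lam0.im ∧
        u + ContinuousLinearMap.adjoint (M.ΓR (-lam0)) a ∈ M.A.adjoint.domain) →
      ∀ lam : ℂ, 0 < lam.im →
        u + ContinuousLinearMap.adjoint (M.ΓR (-lam)) a ∈ M.A.adjoint.domain) := by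
  constructor
  · rintro ⟨mu0, hmu0, hmem⟩ mu hmu
    have h₁ : 0 < (-mu).im := by simp; linarith
    have h₂ : 0 < (-mu0).im := by simp; linarith
    have key := M.adjoint_ΓsRs_diff (-mu) (-mu0) h₁ h₂ b
    rw [key]
    have hconj : (starRingEnd ℂ (-mu)).im < 0 := by simp [Complex.conj_im]; linarith
    have : u + (ContinuousLinearMap.adjoint (M.ΓsRs (-mu0)) b +
        (starRingEnd ℂ (-mu - -mu0)) •
          M.R (starRingEnd ℂ (-mu)) (ContinuousLinearMap.adjoint (M.ΓsRs (-mu0)) b)) =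
      (u + ContinuousLinearMap.adjoint (M.ΓsRs (-mu0)) b) +
        (starRingEnd ℂ (-mu - -mu0)) •
          M.R (starRingEnd ℂ (-mu)) (ContinuousLinearMap.adjoint (M.ΓsRs (-mu0)) b) := by
      abel
    rw [this]
    exact M.A.domain.add_mem hmem
      (M.A.domain.smul_mem _ (M.R_mem _ hconj _))
  · rintro ⟨lam0, hlam0, hmem⟩ lam hlam
    have h₁ : (-lam).im < 0 := by simp; linarith
    have h₂ : (-lam0).im < 0 := by simp; linarith
    have key := M.adjoint_ΓR_diff (-lam) (-lam0) h₁ h₂ a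
    rw [key]
    have hconj : 0 < (starRingEnd ℂ (-lam)).im := by simp [Complex.conj_im]; linarith
    have : u + (ContinuousLinearMap.adjoint (M.ΓR (-lam0)) a +
        (starRingEnd ℂ (-lam - -lam0)) •
          M.Rs (starRingEnd ℂ (-lam)) (ContinuousLinearMap.adjoint (M.ΓR (-lam0)) a)) =
      (u + ContinuousLinearMap.adjoint (M.ΓR (-lam0)) a) +
        (starRingEnd ℂ (-lam - -lam0)) •
          M.Rs (starRingEnd ℂ (-lam)) (ContinuousLinearMap.adjoint (M.ΓR (-lam0)) a) := by
      abel
    rw [this]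
    exact M.A.adjoint.domain.add_mem hmem
      (M.A.adjoint.domain.smul_mem _ (M.Rs_mem _ hconj _))


end
end

section
/- Let μ, μ̃ ∈ ℂ with Im μ < 0 and Im μ̃ < 0, and let b ∈ E_*. Then the vector w := ((Γ_*(A* + μ)^{-1})* − (Γ_*(A* + μ̃)^{-1})*) b lies in D(A), and S(−μ)* b − S(−μ̃)* b + iΓw = 0 in E. (Here −μ and −μ̃ lie in the open upper half-plane, so S(−μ) and S(−μ̃) are the contractions given by the Štraus characteristic function.) -/
open scoped ComplexInnerProductSpace

noncomputable section

section Aux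

variable {H E Es : Type*}
    [NormedAddCommGroup H] [InnerProductSpace ℂ H] [CompleteSpace H]
    [NormedAddCommGroup E] [InnerProductSpace ℂ E] [CompleteSpace E]
    [NormedAddCommGroup Es] [InnerProductSpace ℂ Es] [CompleteSpace Es]

/-- `R (conj z)` is the adjoint of `Rs z`. -/
lemma MDO.R_conj_adjoint (M : MDO H) {z : ℂ} (hz : 0 < z.im) (g h : H) :
    ⟪M.R ((starRingEnd ℂ) z) g, h⟫ = ⟪g, M.Rs z h⟫ := by
  have hcz : ((starRingEnd ℂ) z).im < 0 := by
    simpa [Complex.conj_im] using hz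
  set u : M.A.domain := ⟨M.R ((starRingEnd ℂ) z) g, M.R_mem _ hcz g⟩ with hu
  set v : M.A.adjoint.domain := ⟨M.Rs z h, M.Rs_mem z hz h⟩ with hv
  have hg : M.A u - (starRingEnd ℂ) z • (u : H) = g := M.R_right _ hcz g
  have hh : M.A.adjoint v - z • (v : H) = h := M.Rs_right z hz h
  have hadj : ⟪(M.A.adjoint v : H), (u : H)⟫ = ⟪(v : H), M.A u⟫ :=
    (LinearPMap.adjoint_isFormalAdjoint M.dense_dom) v u
  have : ⟪(u : H), h⟫ = ⟪g, (v : H)⟫ := by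
    rw [← hg, ← hh]
    rw [inner_sub_right, inner_sub_left, inner_smul_right, inner_smul_left]
    have h1 : ⟪(u : H), (M.A.adjoint v : H)⟫ = ⟪(M.A u : H), (v : H)⟫ := by
      rw [← inner_conj_symm, hadj, inner_conj_symm]
    rw [h1]
    simp [Complex.conj_conj]
  exact this

/-- Resolvent identity for `Rs`. -/
lemma MDO.Rs_res_id (M : MDO H) {z z' : ℂ} (hz : 0 < z.im) (hz' : 0 < z'.im) (h : H) :
    M.Rs z h = M.Rs z' h + (z - z') • M.Rs z (M.Rs z' h) := by
  set v' : M.A.adjoint.domain := ⟨M.Rs z' h, M.Rs_mem z' hz' h⟩ with hv'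
  have e1 : M.A.adjoint v' - z' • (v' : H) = h := M.Rs_right z' hz' h
  have e2 : M.A.adjoint v' - z' • (v' : H)
      = (M.A.adjoint v' - z • (v' : H)) + (z - z') • (v' : H) := by
    rw [sub_smul]; abel
  calc M.Rs z h = M.Rs z ((M.A.adjoint v' - z • (v' : H)) + (z - z') • (v' : H)) := by
        rw [← e2, e1]
    _ = M.Rs z' h + (z - z') • M.Rs z (M.Rs z' h) := by
        rw [map_add, map_smul, M.Rs_left z hz v']

end Aux

/-- Independence of the boundary condition (I) from the regularisation
parameter: for `Im μ, Im μ̃ < 0` and `b ∈ E_*`, the vector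
`w = ((Γ_*(A* + μ)⁻¹)* - (Γ_*(A* + μ̃)⁻¹)*) b` lies in `D(A)` and
`S(-μ)* b - S(-μ̃)* b + iΓw = 0`. -/
theorem stmt14 {H E Es : Type*}
    [NormedAddCommGroup H] [InnerProductSpace ℂ H] [CompleteSpace H]
    [NormedAddCommGroup E] [InnerProductSpace ℂ E] [CompleteSpace E]
    [NormedAddCommGroup Es] [InnerProductSpace ℂ Es] [CompleteSpace Es]
    (M : StrausSetting H E Es)
    (S : ℂ → E →L[ℂ] Es)
    (hS_norm : ∀ z : ℂ, 0 < z.im → ‖S z‖ ≤ 1)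
    (hS : ∀ (z : ℂ), 0 < z.im → ∀ u : M.A.domain,
      S z (M.Γ u) = M.ΓsRs z (M.A u - z • (u : H)))
    (mu mu' : ℂ) (hmu : mu.im < 0) (hmu' : mu'.im < 0) (b : Es) :
    ∃ hw : ContinuousLinearMap.adjoint (M.ΓsRs (-mu)) b
        - ContinuousLinearMap.adjoint (M.ΓsRs (-mu')) b ∈ M.A.domain,
      ContinuousLinearMap.adjoint (S (-mu)) b - ContinuousLinearMap.adjoint (S (-mu')) b
          + Complex.I •
            M.Γ ⟨ContinuousLinearMap.adjoint (M.ΓsRs (-mu)) b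
              - ContinuousLinearMap.adjoint (M.ΓsRs (-mu')) b, hw⟩ = 0 := by
  have hz : (0:ℝ) < (-mu).im := by simp [Complex.neg_im]; linarith
  have hz' : (0:ℝ) < (-mu').im := by simp [Complex.neg_im]; linarith
  set z := -mu with hzdef
  set z' := -mu' with hz'def
  set g : H := ContinuousLinearMap.adjoint (M.ΓsRs z) b with hg
  set g' : H := ContinuousLinearMap.adjoint (M.ΓsRs z') b with hg'
  have hcz' : ((starRingEnd ℂ) z').im < 0 := by simpa [Complex.conj_im] using hz'
  set v' : M.A.domain := ⟨M.R ((starRingEnd ℂ) z') g, M.R_mem _ hcz' g⟩ with hv'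
  set c : ℂ := (starRingEnd ℂ) z - (starRingEnd ℂ) z' with hc
  -- key identity: g - g' = c • v'
  have key : g - g' = c • (v' : H) := by
    apply ext_inner_right ℂ
    intro h
    rw [inner_sub_left, hg, hg', ContinuousLinearMap.adjoint_inner_left,
      ContinuousLinearMap.adjoint_inner_left]
    have r1 : M.ΓsRs z h = M.Γs ⟨M.Rs z h, M.Rs_mem z hz h⟩ := M.ΓsRs_spec z hz h
    have r2 : M.ΓsRs z' h = M.Γs ⟨M.Rs z' h, M.Rs_mem z' hz' h⟩ := M.ΓsRs_spec z' hz' h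
    have memzz' : M.Rs z (M.Rs z' h) ∈ M.A.adjoint.domain := M.Rs_mem z hz _
    have hsub : (⟨M.Rs z h, M.Rs_mem z hz h⟩ : M.A.adjoint.domain)
        = ⟨M.Rs z' h, M.Rs_mem z' hz' h⟩ + (z - z') • ⟨M.Rs z (M.Rs z' h), memzz'⟩ := by
      apply Subtype.ext
      simpa using M.Rs_res_id hz hz' h
    rw [r1, r2, hsub, map_add, map_smul]
    have r3 : M.Γs ⟨M.Rs z (M.Rs z' h), memzz'⟩ = M.ΓsRs z (M.Rs z' h) :=
      (M.ΓsRs_spec z hz (M.Rs z' h)).symm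
    rw [r3]
    have r4 : ⟪b, M.ΓsRs z (M.Rs z' h)⟫ = ⟪g, M.Rs z' h⟫ := by
      rw [hg, ContinuousLinearMap.adjoint_inner_left]
    have r5 : ⟪g, M.Rs z' h⟫ = ⟪M.R ((starRingEnd ℂ) z') g, h⟫ :=
      (M.toMDO.R_conj_adjoint hz' g h).symm
    rw [inner_add_right, inner_smul_right, r4, r5, inner_smul_left]
    simp only [hc, map_sub, Complex.conj_conj]
    ring
  have hw : g - g' ∈ M.A.domain := by
    rw [key]; exact M.A.domain.smul_mem c v'.2
  refine ⟨hw, ?_⟩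
  set W : M.A.domain := ⟨g - g', hw⟩ with hW
  have hWv : W = c • v' := Subtype.ext key
  -- value of A on W
  have hAv' : M.A v' = g + (starRingEnd ℂ) z' • (v' : H) := by
    have := M.R_right _ hcz' g
    have h2 : M.A v' - (starRingEnd ℂ) z' • (v' : H) = g := this
    linear_combination (norm := abel) h2
  have hAW : M.A W = c • (g + (starRingEnd ℂ) z' • (v' : H)) := by
    rw [hWv, LinearPMap.map_smul, hAv']
  set X : E := ContinuousLinearMap.adjoint (S z) b - ContinuousLinearMap.adjoint (S z') b
      + Complex.I • M.Γ W with hX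
  have hXu : ∀ u : M.A.domain, ⟪X, M.Γ u⟫ = 0 := by
    intro u
    have e1 : ⟪ContinuousLinearMap.adjoint (S z) b, M.Γ u⟫
        = ⟪g, (M.A u : H)⟫ - z * ⟪g, (u : H)⟫ := by
      rw [ContinuousLinearMap.adjoint_inner_left, hS z hz u, ← ContinuousLinearMap.adjoint_inner_left (M.ΓsRs z), ← hg,
        inner_sub_right, inner_smul_right]
    have e2 : ⟪ContinuousLinearMap.adjoint (S z') b, M.Γ u⟫
        = ⟪g', (M.A u : H)⟫ - z' * ⟪g', (u : H)⟫ := by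
      rw [ContinuousLinearMap.adjoint_inner_left, hS z' hz' u, ← ContinuousLinearMap.adjoint_inner_left (M.ΓsRs z'), ← hg',
        inner_sub_right, inner_smul_right]
    have e3 : (⟪g, (M.A u : H)⟫ - ⟪g', (M.A u : H)⟫)
        - ((z - z') * ⟪g, (u : H)⟫ + (z - z') * (z' * ⟪(v' : H), (u : H)⟫))
        = Complex.I * ⟪M.Γ W, M.Γ u⟫ := by
      have lag := M.lagrange u W
      have hWcoe : (W : H) = g - g' := rfl
      rw [hWcoe, hAW] at lag
      rw [inner_sub_left, inner_smul_left, inner_add_left, inner_smul_left] at lag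
      simp only [hc, map_sub, Complex.conj_conj] at lag
      linear_combination lag
    have e4 : ⟪g, (u : H)⟫ - ⟪g', (u : H)⟫ = (z - z') * ⟪(v' : H), (u : H)⟫ := by
      have := congrArg (fun x : H => ⟪x, (u : H)⟫) key
      simp only [inner_sub_left, inner_smul_left, hc, map_sub, Complex.conj_conj] at this
      linear_combination this
    rw [hX, inner_add_left, inner_sub_left, inner_smul_left, Complex.conj_I]
    linear_combination e1 - e2 + e3 - z' * e4
  have hXzero : X = 0 := by
    have hcont1 : Continuous fun e : E => ⟪X, e⟫ := (innerSL ℂ X).continuous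
    have heq : (fun e : E => ⟪X, e⟫) = fun _ : E => (0 : ℂ) := by
      apply Continuous.ext_on M.Γ_dense hcont1 continuous_const
      rintro e ⟨u, rfl⟩
      exact hXu u
    have := congrFun heq X
    exact inner_self_eq_zero.mp this
  exact hXzero


end
end

section
/- Let μ, λ ∈ ℂ with Im μ < 0 and Im λ > 0, and let u ∈ H, a ∈ E, b ∈ E_*. Then the following two conditions are equivalent: (I) u + (Γ_*(A* + μ)^{-1})* b ∈ D(A) and a = S(−μ)* b + iΓ(u + (Γ_*(A* + μ)^{-1})* b); (II) u + (Γ(A + λ)^{-1})* a ∈ D(A*) and b = S(−λ̄) a − iΓ_*(u + (Γ(A + λ)^{-1})* a), where λ̄ is the complex conjugate of λ (so −μ and −λ̄ lie in the open upper half-plane). -/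
open scoped ComplexInnerProductSpace

noncomputable section

section StrausAux

open Complex ContinuousLinearMap

private lemma denseRange_inner_ext {F ι : Type*} [NormedAddCommGroup F]
    [InnerProductSpace ℂ F] {f : ι → F} (hf : DenseRange f) {x y : F}
    (h : ∀ i, ⟪x, f i⟫ = ⟪y, f i⟫) : x = y := by
  have hfun : (fun d : F => (⟪x, d⟫ : ℂ)) = fun d => ⟪y, d⟫ :=
    hf.equalizer (continuous_const.inner continuous_id)
      (continuous_const.inner continuous_id) (funext fun i => h i)
  exact ext_inner_right ℂ fun v => congrFun hfun v

private lemma denseRange_inner_ext_left {F ι : Type*} [NormedAddCommGroup F]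
    [InnerProductSpace ℂ F] {f : ι → F} (hf : DenseRange f) {x y : F}
    (h : ∀ i, ⟪f i, x⟫ = ⟪f i, y⟫) : x = y :=
  denseRange_inner_ext hf fun i => by
    rw [← inner_conj_symm, h i, inner_conj_symm]

variable {H E Es : Type*}
    [NormedAddCommGroup H] [InnerProductSpace ℂ H] [CompleteSpace H]
    [NormedAddCommGroup E] [InnerProductSpace ℂ E] [CompleteSpace E]
    [NormedAddCommGroup Es] [InnerProductSpace ℂ Es] [CompleteSpace Es]
    (M : StrausSetting H E Es)

private lemma adj_pair (q : M.A.adjoint.domain) (v : M.A.domain) :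
    ⟪M.A.adjoint q, (v : H)⟫ = ⟪(q : H), M.A v⟫ :=
  LinearPMap.adjoint_isFormalAdjoint M.dense_dom q v

private lemma rs_adj {z : ℂ} (hz : 0 < z.im) (x y : H) :
    ⟪M.Rs z x, y⟫ = ⟪x, M.R (starRingEnd ℂ z) y⟫ := by
  have hz' : (starRingEnd ℂ z).im < 0 := by rw [Complex.conj_im]; linarith
  have hy : M.A ⟨M.R (starRingEnd ℂ z) y, M.R_mem _ hz' y⟩
      - (starRingEnd ℂ z) • M.R (starRingEnd ℂ z) y = y := M.R_right _ hz' y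
  have hx : M.A.adjoint ⟨M.Rs z x, M.Rs_mem z hz x⟩ - z • M.Rs z x = x :=
    M.Rs_right z hz x
  calc ⟪M.Rs z x, y⟫
      = ⟪M.Rs z x, M.A ⟨M.R (starRingEnd ℂ z) y, M.R_mem _ hz' y⟩
          - (starRingEnd ℂ z) • M.R (starRingEnd ℂ z) y⟫ := by rw [hy]
    _ = ⟪M.Rs z x, M.A ⟨M.R (starRingEnd ℂ z) y, M.R_mem _ hz' y⟩⟫
          - starRingEnd ℂ z * ⟪M.Rs z x, M.R (starRingEnd ℂ z) y⟫ := by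
        rw [inner_sub_right, inner_smul_right]
    _ = ⟪M.A.adjoint ⟨M.Rs z x, M.Rs_mem z hz x⟩, M.R (starRingEnd ℂ z) y⟫
          - ⟪z • M.Rs z x, M.R (starRingEnd ℂ z) y⟫ := by
        rw [adj_pair M ⟨M.Rs z x, M.Rs_mem z hz x⟩ ⟨M.R (starRingEnd ℂ z) y, M.R_mem _ hz' y⟩,
          inner_smul_left]
    _ = ⟪M.A.adjoint ⟨M.Rs z x, M.Rs_mem z hz x⟩ - z • M.Rs z x,
          M.R (starRingEnd ℂ z) y⟫ := by rw [inner_sub_left]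
    _ = ⟪x, M.R (starRingEnd ℂ z) y⟫ := by rw [hx]

private lemma r_adj {z : ℂ} (hz : 0 < z.im) (x y : H) :
    ⟪M.R (starRingEnd ℂ z) y, x⟫ = ⟪y, M.Rs z x⟫ := by
  have := congrArg (starRingEnd ℂ) (rs_adj M hz x y)
  simpa [inner_conj_symm] using this.symm

private lemma Pb_pair (S : ℂ → E →L[ℂ] Es)
    (hS : ∀ (z : ℂ), 0 < z.im → ∀ u : M.A.domain,
      S z (M.Γ u) = M.ΓsRs z (M.A u - z • (u : H)))
    {z : ℂ} (hz : 0 < z.im) (b : Es) (v : M.A.domain) :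
    ⟪(adjoint (M.ΓsRs z)) b, M.A v⟫
      = ⟪(adjoint (S z)) b, M.Γ v⟫ + z * ⟪(adjoint (M.ΓsRs z)) b, (v : H)⟫ := by
  have h2 : M.A v = (M.A v - z • (v : H)) + z • (v : H) := by abel
  have h1 : M.ΓsRs z (M.A v) = S z (M.Γ v) + z • M.ΓsRs z (v : H) := by
    rw [h2, map_add, map_smul, hS z hz v]
  rw [adjoint_inner_left, h1, inner_add_right, inner_smul_right,
    ← adjoint_inner_left, ← adjoint_inner_left]

private lemma Qa_pair {z : ℂ} (hz : z.im < 0) (a : E) (v : M.A.domain) :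
    ⟪(adjoint (M.ΓR z)) a, M.A v⟫
      = ⟪a, M.Γ v⟫ + z * ⟪(adjoint (M.ΓR z)) a, (v : H)⟫ := by
  have key : M.ΓR z (M.A v - z • (v : H)) = M.Γ v := by
    rw [M.ΓR_spec z hz]
    exact congrArg M.Γ (Subtype.ext (M.R_left z hz v))
  have h2 : M.A v = (M.A v - z • (v : H)) + z • (v : H) := by abel
  have h1 : M.ΓR z (M.A v) = M.Γ v + z • M.ΓR z (v : H) := by
    rw [h2, map_add, map_smul, key]
  rw [adjoint_inner_left, h1, inner_add_right, inner_smul_right, ← adjoint_inner_left]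

private lemma Pb_pair_star {z : ℂ} (hz : 0 < z.im) (b : Es) (ψ : M.A.adjoint.domain) :
    ⟪(adjoint (M.ΓsRs z)) b, M.A.adjoint ψ⟫
      = ⟪b, M.Γs ψ⟫ + z * ⟪(adjoint (M.ΓsRs z)) b, (ψ : H)⟫ := by
  have key : M.ΓsRs z (M.A.adjoint ψ - z • (ψ : H)) = M.Γs ψ := by
    rw [M.ΓsRs_spec z hz]
    exact congrArg M.Γs (Subtype.ext (M.Rs_left z hz ψ))
  have h2 : M.A.adjoint ψ = (M.A.adjoint ψ - z • (ψ : H)) + z • (ψ : H) := by abel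
  have h1 : M.ΓsRs z (M.A.adjoint ψ) = M.Γs ψ + z • M.ΓsRs z (ψ : H) := by
    rw [h2, map_add, map_smul, key]
  rw [adjoint_inner_left, h1, inner_add_right, inner_smul_right, ← adjoint_inner_left]

private lemma gamma_inner (u v : M.A.domain) :
    (⟪M.Γ v, M.Γ u⟫ : ℂ)
      = -Complex.I * (⟪(v : H), M.A u⟫ - ⟪M.A v, (u : H)⟫) := by
  rw [M.lagrange u v, ← mul_assoc, neg_mul, Complex.I_mul_I, neg_neg, one_mul]

private lemma gammas_inner (u v : M.A.adjoint.domain) :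
    (⟪M.Γs v, M.Γs u⟫ : ℂ)
      = Complex.I * (⟪(v : H), M.A.adjoint u⟫ - ⟪M.A.adjoint v, (u : H)⟫) := by
  rw [M.lagrange_star u v, ← mul_assoc, mul_neg, Complex.I_mul_I, neg_neg, one_mul]

private lemma Sdual (S : ℂ → E →L[ℂ] Es)
    (hS : ∀ (z : ℂ), 0 < z.im → ∀ u : M.A.domain,
      S z (M.Γ u) = M.ΓsRs z (M.A u - z • (u : H)))
    {w : ℂ} (hw : 0 < w.im) (ψ : M.A.adjoint.domain) :
    adjoint (S w) (M.Γs ψ)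
      = M.ΓR (starRingEnd ℂ w) (M.A.adjoint ψ - starRingEnd ℂ w • (ψ : H)) := by
  have hw' : (starRingEnd ℂ w).im < 0 := by rw [Complex.conj_im]; linarith
  set d : H := M.A.adjoint ψ - starRingEnd ℂ w • (ψ : H) with hd
  set p : M.A.domain := ⟨M.R (starRingEnd ℂ w) d, M.R_mem (starRingEnd ℂ w) hw' d⟩ with hp
  have hpv : (p : H) = M.R (starRingEnd ℂ w) d := rfl
  rw [M.ΓR_spec (starRingEnd ℂ w) hw' d, ← hp]
  refine denseRange_inner_ext M.Γ_dense fun u => ?_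
  set u' : M.A.adjoint.domain :=
    ⟨M.Rs w (M.A u - w • (u : H)), M.Rs_mem w hw (M.A u - w • (u : H))⟩ with hu'
  have hu'v : (u' : H) = M.Rs w (M.A u - w • (u : H)) := rfl
  have hAu' : M.A.adjoint u' = (M.A u - w • (u : H)) + w • (u' : H) := by
    rw [hu'v]; exact sub_eq_iff_eq_add.mp (M.Rs_right w hw (M.A u - w • (u : H)))
  have hAp : M.A p = d + starRingEnd ℂ w • (p : H) := by
    rw [hpv]; exact sub_eq_iff_eq_add.mp (M.R_right (starRingEnd ℂ w) hw' d)
  have hL : (⟪adjoint (S w) (M.Γs ψ), M.Γ u⟫ : ℂ) = ⟪M.Γs ψ, M.Γs u'⟫ := by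
    rw [adjoint_inner_left, hS w hw u, M.ΓsRs_spec w hw, ← hu']
  have hcψ : ∀ x : H, (⟪d, x⟫ : ℂ) = ⟪M.A.adjoint ψ, x⟫ - w * ⟪(ψ : H), x⟫ := by
    intro x
    rw [hd, inner_sub_left, inner_smul_left, Complex.conj_conj]
  have e1 : (⟪(p : H), M.A u⟫ : ℂ) = ⟪d, (u' : H)⟫ + w * ⟪(p : H), (u : H)⟫ := by
    have hsplit : M.A u = (M.A u - w • (u : H)) + w • (u : H) := by abel
    rw [hpv, r_adj M hw (M.A u) d, hsplit, map_add, map_smul, inner_add_right,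
      inner_smul_right, ← hu'v, ← r_adj M hw (u : H) d, ← hpv]
  have e2 : (⟪M.A p, (u : H)⟫ : ℂ)
      = ⟪M.A.adjoint ψ, (u : H)⟫ - w * ⟪(ψ : H), (u : H)⟫
        + w * ⟪(p : H), (u : H)⟫ := by
    rw [hAp, inner_add_left, inner_smul_left, Complex.conj_conj, hcψ]
  have e3 : (⟪d, (u' : H)⟫ : ℂ)
      = ⟪M.A.adjoint ψ, (u' : H)⟫ - w * ⟪(ψ : H), (u' : H)⟫ := hcψ _
  have e4 : (⟪(ψ : H), M.A.adjoint u'⟫ : ℂ)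
      = ⟪(ψ : H), M.A u⟫ - w * ⟪(ψ : H), (u : H)⟫ + w * ⟪(ψ : H), (u' : H)⟫ := by
    rw [hAu', inner_add_right, inner_sub_right, inner_smul_right, inner_smul_right]
  have e5 : (⟪(ψ : H), M.A u⟫ : ℂ) = ⟪M.A.adjoint ψ, (u : H)⟫ := (adj_pair M ψ u).symm
  rw [hL, gammas_inner M u' ψ, gamma_inner M u p, e4, e5, e1, e2, e3]
  ring

private lemma Qa_pair_star (S : ℂ → E →L[ℂ] Es)
    (hS : ∀ (z : ℂ), 0 < z.im → ∀ u : M.A.domain,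
      S z (M.Γ u) = M.ΓsRs z (M.A u - z • (u : H)))
    {w : ℂ} (hw : 0 < w.im) (a : E) (ψ : M.A.adjoint.domain) :
    ⟪(adjoint (M.ΓR (starRingEnd ℂ w))) a, M.A.adjoint ψ⟫
      = ⟪S w a, M.Γs ψ⟫
        + starRingEnd ℂ w * ⟪(adjoint (M.ΓR (starRingEnd ℂ w))) a, (ψ : H)⟫ := by
  have hsplit : M.A.adjoint ψ
      = (M.A.adjoint ψ - starRingEnd ℂ w • (ψ : H)) + starRingEnd ℂ w • (ψ : H) := by
    abel
  rw [adjoint_inner_left, hsplit, map_add, map_smul, inner_add_right, inner_smul_right,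
    ← Sdual M S hS hw ψ, adjoint_inner_right, ← adjoint_inner_left]

private lemma opId (S : ℂ → E →L[ℂ] Es)
    (hS : ∀ (z : ℂ), 0 < z.im → ∀ u : M.A.domain,
      S z (M.Γ u) = M.ΓsRs z (M.A u - z • (u : H)))
    {z w : ℂ} (hz : 0 < z.im) (hw : 0 < w.im) (b : Es) :
    S w (adjoint (S z) b)
      - (Complex.I * (w - starRingEnd ℂ z)) • M.ΓsRs w (adjoint (M.ΓsRs z) b) = b := by
  refine denseRange_inner_ext_left M.Γs_dense fun ψ => ?_
  have hw' : (starRingEnd ℂ w).im < 0 := by rw [Complex.conj_im]; linarith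
  set d : H := M.A.adjoint ψ - starRingEnd ℂ w • (ψ : H) with hd
  set p : M.A.domain := ⟨M.R (starRingEnd ℂ w) d, M.R_mem (starRingEnd ℂ w) hw' d⟩ with hp
  have hpv : (p : H) = M.R (starRingEnd ℂ w) d := rfl
  have hAp : M.A p = d + starRingEnd ℂ w • (p : H) := by
    rw [hpv]; exact sub_eq_iff_eq_add.mp (M.R_right (starRingEnd ℂ w) hw' d)
  have hcψ : ∀ x : H, (⟪d, x⟫ : ℂ) = ⟪M.A.adjoint ψ, x⟫ - w * ⟪(ψ : H), x⟫ := by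
    intro x
    rw [hd, inner_sub_left, inner_smul_left, Complex.conj_conj]
  have hP : ∀ x : H, (⟪x, adjoint (M.ΓsRs z) b⟫ : ℂ) = ⟪M.ΓsRs z x, b⟫ := by
    intro x
    rw [← inner_conj_symm, adjoint_inner_left, inner_conj_symm]
  have t1 : (⟪M.Γs ψ, S w (adjoint (S z) b)⟫ : ℂ) = ⟪S z (M.Γ p), b⟫ := by
    rw [← adjoint_inner_left, Sdual M S hS hw ψ, ← hd, M.ΓR_spec (starRingEnd ℂ w) hw' d,
      ← hp, adjoint_inner_right]
  have hApz : M.A p - z • (p : H) = d + (starRingEnd ℂ w - z) • (p : H) := by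
    rw [hAp, sub_smul]; abel
  have t2 : S z (M.Γ p)
      = (M.Γs ψ - (starRingEnd ℂ w - z) • M.ΓsRs z (ψ : H))
        + (starRingEnd ℂ w - z) • M.ΓsRs z (p : H) := by
    rw [hS z hz p, hApz, map_add, map_smul]
    congr 1
    have hdsplit : d = (M.A.adjoint ψ - z • (ψ : H)) - (starRingEnd ℂ w - z) • (ψ : H) := by
      rw [hd, sub_smul]; abel
    rw [hdsplit, map_sub, map_smul]
    congr 1
    rw [M.ΓsRs_spec z hz]
    exact congrArg M.Γs (Subtype.ext (M.Rs_left z hz ψ))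
  set r : M.A.adjoint.domain :=
    ⟨M.Rs w (adjoint (M.ΓsRs z) b), M.Rs_mem w hw (adjoint (M.ΓsRs z) b)⟩ with hr
  have hrv : (r : H) = M.Rs w (adjoint (M.ΓsRs z) b) := rfl
  have hAr : M.A.adjoint r = adjoint (M.ΓsRs z) b + w • (r : H) := by
    rw [hrv]; exact sub_eq_iff_eq_add.mp (M.Rs_right w hw (adjoint (M.ΓsRs z) b))
  have t3 : (⟪M.Γs ψ, M.ΓsRs w (adjoint (M.ΓsRs z) b)⟫ : ℂ)
      = Complex.I * (⟪M.ΓsRs z (ψ : H), b⟫ - ⟪M.ΓsRs z (p : H), b⟫) := by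
    rw [M.ΓsRs_spec w hw, ← hr, gammas_inner M r ψ]
    have h1 : (⟪(ψ : H), M.A.adjoint r⟫ : ℂ)
        = ⟪(ψ : H), adjoint (M.ΓsRs z) b⟫ + w * ⟪(ψ : H), (r : H)⟫ := by
      rw [hAr, inner_add_right, inner_smul_right]
    have h2 : (⟪M.A.adjoint ψ, (r : H)⟫ : ℂ)
        = ⟪d, (r : H)⟫ + w * ⟪(ψ : H), (r : H)⟫ := by
      rw [hcψ]; ring
    have h3 : (⟪d, (r : H)⟫ : ℂ) = ⟪M.ΓsRs z (p : H), b⟫ := by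
      rw [hrv, ← r_adj M hw (adjoint (M.ΓsRs z) b) d, ← hpv, hP]
    rw [h1, h2, h3, hP]
    ring
  rw [inner_sub_right, inner_smul_right, t1, t2, inner_add_left, inner_sub_left,
    inner_smul_left, inner_smul_left, t3]
  simp only [map_sub, Complex.conj_conj]
  linear_combination (-((w - starRingEnd ℂ z)
      * ((⟪M.ΓsRs z (ψ : H), b⟫ : ℂ) - ⟪M.ΓsRs z (p : H), b⟫))) * Complex.I_mul_I

private lemma fwd_main (S : ℂ → E →L[ℂ] Es)
    (hS : ∀ (z : ℂ), 0 < z.im → ∀ u : M.A.domain,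
      S z (M.Γ u) = M.ΓsRs z (M.A u - z • (u : H)))
    {z ζ w : ℂ} (hz : 0 < z.im) (hζ : ζ.im < 0) (hww : starRingEnd ℂ ζ = w)
    (f : M.A.domain) (b : Es) (a : E)
    (ha : a = adjoint (S z) b + Complex.I • M.Γ f) (v : M.A.domain) :
    (⟪(f : H) - adjoint (M.ΓsRs z) b + adjoint (M.ΓR ζ) a, M.A v - ζ • (v : H)⟫ : ℂ)
      = ⟪M.A f - w • (f : H)
          + (w - starRingEnd ℂ z) • adjoint (M.ΓsRs z) b, (v : H)⟫ := by
  subst hww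
  have t1 : (⟪(f : H), M.A v⟫ : ℂ)
      = ⟪M.A f, (v : H)⟫ + Complex.I * ⟪M.Γ f, M.Γ v⟫ := by
    linear_combination M.lagrange v f
  have t2 := Pb_pair M S hS hz b v
  have t3 := Qa_pair M hζ a v
  have t4 : (⟪a, M.Γ v⟫ : ℂ)
      = ⟪adjoint (S z) b, M.Γ v⟫ - Complex.I * ⟪M.Γ f, M.Γ v⟫ := by
    rw [ha, inner_add_left, inner_smul_left, Complex.conj_I]; ring
  simp only [inner_sub_left, inner_add_left, inner_sub_right, inner_smul_right,
    inner_smul_left, map_sub, Complex.conj_conj]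
  linear_combination t1 - t2 + t3 + t4

private lemma bwd_main (S : ℂ → E →L[ℂ] Es)
    (hS : ∀ (z : ℂ), 0 < z.im → ∀ u : M.A.domain,
      S z (M.Γ u) = M.ΓsRs z (M.A u - z • (u : H)))
    {z w ζ : ℂ} (hz : 0 < z.im) (hw : 0 < w.im) (hww : starRingEnd ℂ w = ζ)
    (g : M.A.adjoint.domain) (a : E) (b : Es)
    (hb : b = S w a - Complex.I • M.Γs g) (ψ : M.A.adjoint.domain) :
    (⟪(g : H) - adjoint (M.ΓR ζ) a + adjoint (M.ΓsRs z) b,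
        M.A.adjoint ψ - z • (ψ : H)⟫ : ℂ)
      = ⟪M.A.adjoint g - starRingEnd ℂ z • (g : H)
          + (starRingEnd ℂ z - w) • adjoint (M.ΓR ζ) a, (ψ : H)⟫ := by
  subst hww
  have u1 : (⟪(g : H), M.A.adjoint ψ⟫ : ℂ)
      = ⟪M.A.adjoint g, (ψ : H)⟫ - Complex.I * ⟪M.Γs g, M.Γs ψ⟫ := by
    linear_combination M.lagrange_star ψ g
  have u2 := Pb_pair_star M hz b ψ
  have u3 := Qa_pair_star M S hS hw a ψ
  have u4 : (⟪b, M.Γs ψ⟫ : ℂ)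
      = ⟪S w a, M.Γs ψ⟫ + Complex.I * ⟪M.Γs g, M.Γs ψ⟫ := by
    rw [hb, inner_sub_left, inner_smul_left, Complex.conj_I]; ring
  simp only [inner_sub_left, inner_add_left, inner_sub_right, inner_smul_right,
    inner_smul_left, map_sub, Complex.conj_conj]
  linear_combination u1 - u3 + u2 + u4

end StrausAux
set_option maxHeartbeats 800000 in
/-- Equivalence of the two boundary conditions in the definition of the
domain of the dilation: for `Im μ < 0`, `Im λ > 0`, `u ∈ H`, `a ∈ E`, `b ∈ E_*`,
condition (I): `u + (Γ_*(A* + μ)⁻¹)* b ∈ D(A)` and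
`a = S(-μ)* b + iΓ(u + (Γ_*(A* + μ)⁻¹)* b)` holds if and only if condition (II):
`u + (Γ(A + λ)⁻¹)* a ∈ D(A*)` and
`b = S(-λ̄) a - iΓ_*(u + (Γ(A + λ)⁻¹)* a)` holds. -/
theorem stmt15 {H E Es : Type*}
    [NormedAddCommGroup H] [InnerProductSpace ℂ H] [CompleteSpace H]
    [NormedAddCommGroup E] [InnerProductSpace ℂ E] [CompleteSpace E]
    [NormedAddCommGroup Es] [InnerProductSpace ℂ Es] [CompleteSpace Es]
    (M : StrausSetting H E Es)
    (S : ℂ → E →L[ℂ] Es)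
    (hS_norm : ∀ z : ℂ, 0 < z.im → ‖S z‖ ≤ 1)
    (hS : ∀ (z : ℂ), 0 < z.im → ∀ u : M.A.domain,
      S z (M.Γ u) = M.ΓsRs z (M.A u - z • (u : H)))
    (mu lam : ℂ) (hmu : mu.im < 0) (hlam : 0 < lam.im)
    (u : H) (a : E) (b : Es) :
    (∃ h1 : u + ContinuousLinearMap.adjoint (M.ΓsRs (-mu)) b ∈ M.A.domain,
        a = ContinuousLinearMap.adjoint (S (-mu)) b
          + Complex.I •
              M.Γ ⟨u + ContinuousLinearMap.adjoint (M.ΓsRs (-mu)) b, h1⟩) ↔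
    (∃ h2 : u + ContinuousLinearMap.adjoint (M.ΓR (-lam)) a ∈ M.A.adjoint.domain,
        b = S (-(starRingEnd ℂ lam)) a
          - Complex.I •
              M.Γs ⟨u + ContinuousLinearMap.adjoint (M.ΓR (-lam)) a, h2⟩) := by
  constructor
  · rintro ⟨h1, ha⟩
    have hz : 0 < (-mu).im := by rw [Complex.neg_im]; linarith
    have hζ : (-lam).im < 0 := by rw [Complex.neg_im]; linarith
    have hw : 0 < (-(starRingEnd ℂ lam)).im := by
      rw [Complex.neg_im, Complex.conj_im]; linarith
    have hww : starRingEnd ℂ (-lam) = -(starRingEnd ℂ lam) := map_neg _ _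
    have hcw : starRingEnd ℂ (-(starRingEnd ℂ lam)) = -lam := by
      rw [map_neg, Complex.conj_conj]
    set f : M.A.domain := ⟨u + ContinuousLinearMap.adjoint (M.ΓsRs (-mu)) b, h1⟩ with hfdef
    have hfv : (f : H) = u + ContinuousLinearMap.adjoint (M.ΓsRs (-mu)) b := by rw [hfdef]
    set X1 : H := M.A f - (-(starRingEnd ℂ lam)) • (f : H)
      + ((-(starRingEnd ℂ lam)) - starRingEnd ℂ (-mu)) •
          ContinuousLinearMap.adjoint (M.ΓsRs (-mu)) b with hX1
    have hval : (f : H) - ContinuousLinearMap.adjoint (M.ΓsRs (-mu)) b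
        + ContinuousLinearMap.adjoint (M.ΓR (-lam)) a
        = u + ContinuousLinearMap.adjoint (M.ΓR (-lam)) a := by
      rw [hfv]; abel
    have hmem : u + ContinuousLinearMap.adjoint (M.ΓR (-lam)) a
        = M.Rs (-(starRingEnd ℂ lam)) X1 := by
      refine ext_inner_right ℂ fun h => ?_
      calc (⟪u + ContinuousLinearMap.adjoint (M.ΓR (-lam)) a, h⟫ : ℂ)
          = ⟪(f : H) - ContinuousLinearMap.adjoint (M.ΓsRs (-mu)) b
              + ContinuousLinearMap.adjoint (M.ΓR (-lam)) a,
              M.A ⟨M.R (-lam) h, M.R_mem (-lam) hζ h⟩ - (-lam) • M.R (-lam) h⟫ := by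
            rw [M.R_right (-lam) hζ h, hval]
        _ = ⟪X1, M.R (-lam) h⟫ := by
            rw [hX1]
            exact fwd_main M S hS hz hζ hww f b a ha ⟨M.R (-lam) h, M.R_mem (-lam) hζ h⟩
        _ = ⟪M.Rs (-(starRingEnd ℂ lam)) X1, h⟫ := by
            rw [rs_adj M hw, hcw]
    have h2 : u + ContinuousLinearMap.adjoint (M.ΓR (-lam)) a ∈ M.A.adjoint.domain := by
      rw [hmem]; exact M.Rs_mem _ hw X1
    refine ⟨h2, ?_⟩
    have hsub : (⟨u + ContinuousLinearMap.adjoint (M.ΓR (-lam)) a, h2⟩ :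
          M.A.adjoint.domain)
        = ⟨M.Rs (-(starRingEnd ℂ lam)) X1, M.Rs_mem (-(starRingEnd ℂ lam)) hw X1⟩ :=
      Subtype.ext hmem
    rw [hsub, ← M.ΓsRs_spec (-(starRingEnd ℂ lam)) hw X1]
    have hexp : M.ΓsRs (-(starRingEnd ℂ lam)) X1
        = S (-(starRingEnd ℂ lam)) (M.Γ f)
          + ((-(starRingEnd ℂ lam)) - starRingEnd ℂ (-mu)) •
              M.ΓsRs (-(starRingEnd ℂ lam))
                (ContinuousLinearMap.adjoint (M.ΓsRs (-mu)) b) := by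
      rw [hX1, map_add, map_smul, hS (-(starRingEnd ℂ lam)) hw f]
    rw [hexp, ha, map_add, map_smul, smul_add, smul_smul]
    conv_lhs => rw [← opId M S hS hz hw b]
    abel
  · rintro ⟨h2, hb⟩
    have hz : 0 < (-mu).im := by rw [Complex.neg_im]; linarith
    have hζ : (-lam).im < 0 := by rw [Complex.neg_im]; linarith
    have hw : 0 < (-(starRingEnd ℂ lam)).im := by
      rw [Complex.neg_im, Complex.conj_im]; linarith
    have hz' : (starRingEnd ℂ (-mu)).im < 0 := by
      rw [Complex.conj_im, Complex.neg_im]; linarith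
    have hcw : starRingEnd ℂ (-(starRingEnd ℂ lam)) = -lam := by
      rw [map_neg, Complex.conj_conj]
    set g : M.A.adjoint.domain :=
      ⟨u + ContinuousLinearMap.adjoint (M.ΓR (-lam)) a, h2⟩ with hgdef
    have hgv : (g : H) = u + ContinuousLinearMap.adjoint (M.ΓR (-lam)) a := by rw [hgdef]
    set X2 : H := M.A.adjoint g - starRingEnd ℂ (-mu) • (g : H)
      + (starRingEnd ℂ (-mu) - (-(starRingEnd ℂ lam))) •
          ContinuousLinearMap.adjoint (M.ΓR (-lam)) a with hX2
    have hval : (g : H) - ContinuousLinearMap.adjoint (M.ΓR (-lam)) a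
        + ContinuousLinearMap.adjoint (M.ΓsRs (-mu)) b
        = u + ContinuousLinearMap.adjoint (M.ΓsRs (-mu)) b := by
      rw [hgv]; abel
    have hmem : u + ContinuousLinearMap.adjoint (M.ΓsRs (-mu)) b
        = M.R (starRingEnd ℂ (-mu)) X2 := by
      refine ext_inner_right ℂ fun h => ?_
      calc (⟪u + ContinuousLinearMap.adjoint (M.ΓsRs (-mu)) b, h⟫ : ℂ)
          = ⟪(g : H) - ContinuousLinearMap.adjoint (M.ΓR (-lam)) a
              + ContinuousLinearMap.adjoint (M.ΓsRs (-mu)) b,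
              M.A.adjoint ⟨M.Rs (-mu) h, M.Rs_mem (-mu) hz h⟩ - (-mu) • M.Rs (-mu) h⟫ := by
            rw [M.Rs_right (-mu) hz h, hval]
        _ = ⟪X2, M.Rs (-mu) h⟫ := by
            rw [hX2]
            exact bwd_main M S hS hz hw hcw g a b hb ⟨M.Rs (-mu) h, M.Rs_mem (-mu) hz h⟩
        _ = ⟪M.R (starRingEnd ℂ (-mu)) X2, h⟫ := (r_adj M hz h X2).symm
    have h1 : u + ContinuousLinearMap.adjoint (M.ΓsRs (-mu)) b ∈ M.A.domain := by
      rw [hmem]; exact M.R_mem _ hz' X2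
    refine ⟨h1, ?_⟩
    have hsub : (⟨u + ContinuousLinearMap.adjoint (M.ΓsRs (-mu)) b, h1⟩ : M.A.domain)
        = ⟨M.R (starRingEnd ℂ (-mu)) X2, M.R_mem (starRingEnd ℂ (-mu)) hz' X2⟩ :=
      Subtype.ext hmem
    rw [hsub]
    set F : M.A.domain :=
      ⟨M.R (starRingEnd ℂ (-mu)) X2, M.R_mem (starRingEnd ℂ (-mu)) hz' X2⟩ with hFdef
    have hFv : (F : H) = (g : H) - ContinuousLinearMap.adjoint (M.ΓR (-lam)) a
        + ContinuousLinearMap.adjoint (M.ΓsRs (-mu)) b := by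
      rw [hFdef]
      show M.R (starRingEnd ℂ (-mu)) X2 = _
      rw [← hmem, hgv]
      abel
    have hAF : M.A F = X2 + starRingEnd ℂ (-mu) • (F : H) := by
      rw [hFdef]
      exact sub_eq_iff_eq_add.mp (M.R_right (starRingEnd ℂ (-mu)) hz' X2)
    refine denseRange_inner_ext M.Γ_dense fun v => ?_
    have w1 := Qa_pair M hζ a v
    have w2 := Pb_pair M S hS hz b v
    have w3 : (⟪(F : H), M.A v⟫ : ℂ) - ⟪M.A F, (v : H)⟫
        = Complex.I * ⟪M.Γ F, M.Γ v⟫ := M.lagrange v F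
    have w4 : (⟪(F : H), M.A v⟫ : ℂ)
        = ⟪M.A.adjoint g, (v : H)⟫
          - ⟪ContinuousLinearMap.adjoint (M.ΓR (-lam)) a, M.A v⟫
          + ⟪ContinuousLinearMap.adjoint (M.ΓsRs (-mu)) b, M.A v⟫ := by
      rw [hFv, inner_add_left, inner_sub_left, adj_pair M g v]
    have w7 : (⟪(F : H), (v : H)⟫ : ℂ)
        = ⟪(g : H), (v : H)⟫
          - ⟪ContinuousLinearMap.adjoint (M.ΓR (-lam)) a, (v : H)⟫
          + ⟪ContinuousLinearMap.adjoint (M.ΓsRs (-mu)) b, (v : H)⟫ := by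
      rw [hFv, inner_add_left, inner_sub_left]
    have w5 : (⟪M.A F, (v : H)⟫ : ℂ)
        = ⟪M.A.adjoint g, (v : H)⟫ - (-mu) * ⟪(g : H), (v : H)⟫
          + ((-mu) - (-lam)) * ⟪ContinuousLinearMap.adjoint (M.ΓR (-lam)) a, (v : H)⟫
          + (-mu) * ⟪(F : H), (v : H)⟫ := by
      rw [hAF, hX2]
      simp only [inner_add_left, inner_sub_left, inner_smul_left, map_sub, map_neg,
        Complex.conj_conj]
    rw [inner_add_left, inner_smul_left, Complex.conj_I]
    linear_combination -w3 + w4 - w1 + w2 - w5 - (-mu) * w7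

end
end

section
/- Let μ, λ ∈ ℂ with Im μ < 0 and Im λ > 0, and let u ∈ H, a ∈ E, b ∈ E_* be such that u + (Γ_*(A* + μ)^{-1})* b ∈ D(A), u + (Γ(A + λ)^{-1})* a ∈ D(A*), and a = S(−μ)* b + iΓ(u + (Γ_*(A* + μ)^{-1})* b). Then A*(u + (Γ(A + λ)^{-1})* a) + λ̄(Γ(A + λ)^{-1})* a = A(u + (Γ_*(A* + μ)^{-1})* b) + μ̄(Γ_*(A* + μ)^{-1})* b, where λ̄, μ̄ denote complex conjugates. -/
open scoped ComplexInnerProductSpace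

noncomputable section

/-!
Both sides are tested against `c ∈ D(A)`, which is dense. On the left, `A*` moves onto `c`
and `(Γ(A + λ)⁻¹)*` pairs with `(A + λ)c` to give `⟨a, Γc⟩`. On the right, the Lagrange
identity moves `A` onto `c` at the cost of a boundary term `-i⟨Γv, Γc⟩`, and the defining
identity of `S(-μ)` turns the pairing of `(Γ_*(A* + μ)⁻¹)* b` with `(A + μ)c` into
`⟨S(-μ)* b, Γc⟩`; the boundary condition (I) says exactly that these two terms add up to
`⟨a, Γc⟩`.
-/

open ContinuousLinearMap (adjoint adjoint_inner_left)

theorem inner_conj_smul_left_eq_inner_smul_right {𝕜 F : Type*} [RCLike 𝕜]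
    [SeminormedAddCommGroup F] [InnerProductSpace 𝕜 F] (x y : F) (z : 𝕜) :
    inner 𝕜 (starRingEnd 𝕜 z • x) y = inner 𝕜 x (z • y) := by
  rw [inner_smul_left, inner_smul_right, RCLike.conj_conj]

namespace StrausSetting

variable {H E Es : Type*}
    [NormedAddCommGroup H] [InnerProductSpace ℂ H] [CompleteSpace H]
    [NormedAddCommGroup E] [InnerProductSpace ℂ E] [CompleteSpace E]
    [NormedAddCommGroup Es] [InnerProductSpace ℂ Es] [CompleteSpace Es]
    (M : StrausSetting H E Es)

theorem ΓR_apply_sub_smul {z : ℂ} (hz : z.im < 0) (c : M.A.domain) :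
    M.ΓR z (M.A c - z • (c : H)) = M.Γ c := by
  rw [M.ΓR_spec z hz]
  exact congrArg M.Γ (Subtype.ext (M.R_left z hz c))

theorem inner_adjoint_ΓR_sub_smul {z : ℂ} (hz : z.im < 0) (a : E) (c : M.A.domain) :
    ⟪adjoint (M.ΓR z) a, M.A c - z • (c : H)⟫ = ⟪a, M.Γ c⟫ := by
  rw [adjoint_inner_left, M.ΓR_apply_sub_smul hz]

theorem inner_adjoint_ΓsRs_sub_smul {S : E →L[ℂ] Es} {z : ℂ}
    (hS : ∀ c : M.A.domain, S (M.Γ c) = M.ΓsRs z (M.A c - z • (c : H)))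
    (b : Es) (c : M.A.domain) :
    ⟪adjoint (M.ΓsRs z) b, M.A c - z • (c : H)⟫ = ⟪adjoint S b, M.Γ c⟫ := by
  rw [adjoint_inner_left, adjoint_inner_left, hS]

theorem inner_A_left (v c : M.A.domain) :
    ⟪M.A v, (c : H)⟫ = ⟪(v : H), M.A c⟫ - Complex.I * ⟪M.Γ v, M.Γ c⟫ := by
  linear_combination -M.lagrange c v

theorem inner_adjoint_add_conj_smul_adjoint_ΓR {lam : ℂ} (hlam : 0 < lam.im) (u : H) (a : E)
    (w : M.A.adjoint.domain) (hw : (w : H) = u + adjoint (M.ΓR (-lam)) a)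
    (c : M.A.domain) :
    ⟪M.A.adjoint w + starRingEnd ℂ lam • adjoint (M.ΓR (-lam)) a, (c : H)⟫
      = ⟪u, M.A c⟫ + ⟪a, M.Γ c⟫ := by
  have hpair := M.inner_adjoint_ΓR_sub_smul (z := -lam) (by simpa using hlam) a c
  rw [neg_smul, sub_neg_eq_add] at hpair
  rw [inner_add_left, M.A.adjoint_isFormalAdjoint M.dense_dom, hw,
    inner_conj_smul_left_eq_inner_smul_right, inner_add_left, add_assoc,
    ← inner_add_right, hpair]

theorem inner_A_add_conj_smul_adjoint_ΓsRs {S : E →L[ℂ] Es} {mu : ℂ}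
    (hS : ∀ c : M.A.domain, S (M.Γ c) = M.ΓsRs (-mu) (M.A c - (-mu) • (c : H)))
    (u : H) (b : Es) (v : M.A.domain) (hv : (v : H) = u + adjoint (M.ΓsRs (-mu)) b)
    (c : M.A.domain) :
    ⟪M.A v + starRingEnd ℂ mu • adjoint (M.ΓsRs (-mu)) b, (c : H)⟫
      = ⟪u, M.A c⟫ + ⟪adjoint S b, M.Γ c⟫ - Complex.I * ⟪M.Γ v, M.Γ c⟫ := by
  have hpair := M.inner_adjoint_ΓsRs_sub_smul hS b c
  rw [neg_smul, sub_neg_eq_add] at hpair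
  rw [inner_add_left, inner_A_left, hv, inner_conj_smul_left_eq_inner_smul_right,
    inner_add_left, ← hpair, inner_add_right]
  ring

end StrausSetting

theorem stmt16_general {H E Es : Type*}
    [NormedAddCommGroup H] [InnerProductSpace ℂ H] [CompleteSpace H]
    [NormedAddCommGroup E] [InnerProductSpace ℂ E] [CompleteSpace E]
    [NormedAddCommGroup Es] [InnerProductSpace ℂ Es] [CompleteSpace Es]
    (M : StrausSetting H E Es)
    (S : ℂ → E →L[ℂ] Es)
    (hS : ∀ (z : ℂ), 0 < z.im → ∀ u : M.A.domain,
      S z (M.Γ u) = M.ΓsRs z (M.A u - z • (u : H)))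
    (mu lam : ℂ) (hmu : mu.im < 0) (hlam : 0 < lam.im)
    (u : H) (a : E) (b : Es)
    (h1 : u + ContinuousLinearMap.adjoint (M.ΓsRs (-mu)) b ∈ M.A.domain)
    (h2 : u + ContinuousLinearMap.adjoint (M.ΓR (-lam)) a ∈ M.A.adjoint.domain)
    (hI : a = ContinuousLinearMap.adjoint (S (-mu)) b
        + Complex.I •
            M.Γ ⟨u + ContinuousLinearMap.adjoint (M.ΓsRs (-mu)) b, h1⟩) :
    M.A.adjoint ⟨u + ContinuousLinearMap.adjoint (M.ΓR (-lam)) a, h2⟩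
        + (starRingEnd ℂ lam) • ContinuousLinearMap.adjoint (M.ΓR (-lam)) a
      = M.A ⟨u + ContinuousLinearMap.adjoint (M.ΓsRs (-mu)) b, h1⟩
        + (starRingEnd ℂ mu) • ContinuousLinearMap.adjoint (M.ΓsRs (-mu)) b := by
  refine M.dense_dom.eq_of_inner_left ℂ fun c hc => ?_
  have hSmu := hS (-mu) (by simpa using hmu)
  rw [M.inner_adjoint_add_conj_smul_adjoint_ΓR hlam u a _ rfl ⟨c, hc⟩,
    M.inner_A_add_conj_smul_adjoint_ΓsRs hSmu u b _ rfl ⟨c, hc⟩, hI, inner_add_left,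
    inner_smul_left, Complex.conj_I]
  ring

/-- The two formulae for the action of the dilation on `H` coincide:
under the domain conditions and the boundary condition (I),
`A*(u + (Γ(A + λ)⁻¹)* a) + λ̄(Γ(A + λ)⁻¹)* a
  = A(u + (Γ_*(A* + μ)⁻¹)* b) + μ̄(Γ_*(A* + μ)⁻¹)* b`. -/
theorem stmt16 {H E Es : Type*}
    [NormedAddCommGroup H] [InnerProductSpace ℂ H] [CompleteSpace H]
    [NormedAddCommGroup E] [InnerProductSpace ℂ E] [CompleteSpace E]
    [NormedAddCommGroup Es] [InnerProductSpace ℂ Es] [CompleteSpace Es]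
    (M : StrausSetting H E Es)
    (S : ℂ → E →L[ℂ] Es)
    (hS_norm : ∀ z : ℂ, 0 < z.im → ‖S z‖ ≤ 1)
    (hS : ∀ (z : ℂ), 0 < z.im → ∀ u : M.A.domain,
      S z (M.Γ u) = M.ΓsRs z (M.A u - z • (u : H)))
    (mu lam : ℂ) (hmu : mu.im < 0) (hlam : 0 < lam.im)
    (u : H) (a : E) (b : Es)
    (h1 : u + ContinuousLinearMap.adjoint (M.ΓsRs (-mu)) b ∈ M.A.domain)
    (h2 : u + ContinuousLinearMap.adjoint (M.ΓR (-lam)) a ∈ M.A.adjoint.domain)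
    (hI : a = ContinuousLinearMap.adjoint (S (-mu)) b
        + Complex.I •
            M.Γ ⟨u + ContinuousLinearMap.adjoint (M.ΓsRs (-mu)) b, h1⟩) :
    M.A.adjoint ⟨u + ContinuousLinearMap.adjoint (M.ΓR (-lam)) a, h2⟩
        + (starRingEnd ℂ lam) • ContinuousLinearMap.adjoint (M.ΓR (-lam)) a
      = M.A ⟨u + ContinuousLinearMap.adjoint (M.ΓsRs (-mu)) b, h1⟩
        + (starRingEnd ℂ mu) • ContinuousLinearMap.adjoint (M.ΓsRs (-mu)) b :=
  stmt16_general M S hS mu lam hmu hlam u a b h1 h2 hI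

end
end
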